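/- arXiv:0907.4915 — 5 statements merged into one kernel-verified Lean document; each statement's English description precedes it below -/
import Mathlib

section
/- For any nonnegative measurable function g : 𝒳 → [0,∞), the first regeneration block of the split chain satisfies E_ν[Ξ_1(g)²] = m·( E_π[g(X_0)²] + 2·Σ_{n=1}^∞ E_π[ g(X_0)·g(X_n)·1{T > n} ] ), where on the left the split chain starts from X_0 ~ ν, on the right it starts from X_0 ~ π, m := E_ν τ_1 = 1/(β·π(J)), and T := min{n ≥ 1 : Γ_{n−1} = 1} is the first regeneration time. -/
open MeasureTheory ProbabilityTheory Set ENNReal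

/-- The σ-algebra generated by `X 0, …, X n` and `G 0, …, G (n-1)`
(the past of the split chain just before the regeneration indicator `G n` is drawn). -/
def pastBeforeG {Ω 𝒳 : Type*} [MeasurableSpace 𝒳] (X : ℕ → Ω → 𝒳) (G : ℕ → Ω → Bool)
    (n : ℕ) : MeasurableSpace Ω :=
  (⨆ i ∈ Set.Iic n, MeasurableSpace.comap (X i) inferInstance) ⊔
    (⨆ i ∈ Set.Iio n, MeasurableSpace.comap (G i) inferInstance)

/-- The σ-algebra generated by `X 0, …, X n` and `G 0, …, G n`. -/
def pastXG {Ω 𝒳 : Type*} [MeasurableSpace 𝒳] (X : ℕ → Ω → 𝒳) (G : ℕ → Ω → Bool)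
    (n : ℕ) : MeasurableSpace Ω :=
  (⨆ i ∈ Set.Iic n, MeasurableSpace.comap (X i) inferInstance) ⊔
    (⨆ i ∈ Set.Iic n, MeasurableSpace.comap (G i) inferInstance)

/-- The normalized residualKer kernel `Q(x,·) = (P(x,·) − β·1_J(x)·ν(·)) / (1 − β·1_J(x))`. -/
noncomputable def residualKer {𝒳 : Type*} [MeasurableSpace 𝒳] (P : Kernel 𝒳 𝒳) (J : Set 𝒳)
    (β : ℝ) (ν : Measure 𝒳) (x : 𝒳) (A : Set 𝒳) : ℝ≥0∞ :=
  (P x A - ENNReal.ofReal β * J.indicator (fun _ => (1 : ℝ≥0∞)) x * ν A) /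
    (1 - ENNReal.ofReal β * J.indicator (fun _ => (1 : ℝ≥0∞)) x)

/-- `(X, G)` is a version of the split chain of Nummelin/Athreya–Ney associated to the
kernel `P`, small set `J`, minorization constant `β` and minorizing measure `ν`:
given the past up to `X n`, the regeneration indicator `G n` equals `true` with probability
`β·1_J(X n)`; given the past up to `(X n, G n)`, the next state `X (n+1)` is distributed
according to `ν` if `G n = true` and according to the residualKer kernel `Q(X n, ·)` otherwise.
Moreover (the chain being assumed π-irreducible and recurrent in the paper) regenerations
occur infinitely often almost surely. -/
structure IsSplitChain {Ω 𝒳 : Type*} [MeasurableSpace Ω] [MeasurableSpace 𝒳] (μ : Measure Ω)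
    (P : Kernel 𝒳 𝒳) (J : Set 𝒳) (β : ℝ) (ν : Measure 𝒳)
    (X : ℕ → Ω → 𝒳) (G : ℕ → Ω → Bool) : Prop where
  measX : ∀ n, Measurable (X n)
  measG : ∀ n, Measurable (G n)
  condG : ∀ n, ∀ B : Set Ω, MeasurableSet[pastBeforeG X G n] B →
    μ (B ∩ {ω | G n ω = true}) =
      ∫⁻ ω in B, ENNReal.ofReal β * J.indicator (fun _ => (1 : ℝ≥0∞)) (X n ω) ∂μ
  condX : ∀ n, ∀ A : Set 𝒳, MeasurableSet A → ∀ B : Set Ω, MeasurableSet[pastXG X G n] B →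
    μ (B ∩ (X (n+1)) ⁻¹' A) =
      ∫⁻ ω in B, (if G n ω = true then ν A else residualKer P J β ν (X n ω) A) ∂μ
  recur : ∀ᵐ ω ∂μ, ∀ m : ℕ, ∃ n : ℕ, m < n ∧ G (n - 1) ω = true

/-- The regeneration epochs: `T 0 = 0` and `T k = min{n > T (k-1) : G (n-1) = true}`. -/
noncomputable def regTime {Ω : Type*} (G : ℕ → Ω → Bool) : ℕ → Ω → ℕ
  | 0 => fun _ => 0
  | (k + 1) => fun ω => sInf {n : ℕ | regTime G k ω < n ∧ G (n - 1) ω = true}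

/-- `R(n) = min{r ≥ 1 : T r ≥ n}`, the number of the first regeneration epoch `≥ n`. -/
noncomputable def hitNum {Ω : Type*} (G : ℕ → Ω → Bool) (n : ℕ) (ω : Ω) : ℕ :=
  sInf {r : ℕ | 1 ≤ r ∧ n ≤ regTime G r ω}

/-- The first block sum `Ξ₁(f) = ∑_{i=0}^{T 1 − 1} f (X i)`. -/
noncomputable def blockSum1 {Ω 𝒳 : Type*} (f : 𝒳 → ℝ) (X : ℕ → Ω → 𝒳) (G : ℕ → Ω → Bool)
    (ω : Ω) : ℝ :=
  ∑ i ∈ Finset.range (regTime G 1 ω), f (X i ω)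

/-- The regenerative-sequential estimator
`θ̂_{T_{R(n)}} = (1 / T_{R(n)}) ∑_{i=0}^{T_{R(n)} − 1} f (X i)`. -/
noncomputable def regEstimator {Ω 𝒳 : Type*} (f : 𝒳 → ℝ) (X : ℕ → Ω → 𝒳) (G : ℕ → Ω → Bool)
    (n : ℕ) (ω : Ω) : ℝ :=
  (regTime G (hitNum G n ω) ω : ℝ)⁻¹ *
    ∑ i ∈ Finset.range (regTime G (hitNum G n ω) ω), f (X i ω)

/-!
Write `P(x, ·) = K(x, ·) + β 1_J(x) ν` with a sub-Markov kernel `K`. Between regenerations the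
split chain moves by `K`, so for a chain started from `ρ`
`E[1{T > m + d} h(X_m) f(X_{m+d})] = ∫ h · K^d f d(ρK^m)`.
With `λ_ρ = ∑ₙ ρKⁿ`, a block sum therefore has mean `∫ f dλ_ρ` and, expanding the square, second
moment `∫ f² dλ_ρ + 2 ∑ₖ ∫ f · K^(k+1) f dλ_ρ`.
Invariance gives `π = πK + βπ(J) ν`, hence `π = πKⁿ + βπ(J) ∑_{j<n} νKʲ`, and
`πKⁿ(𝒳) = P_π(T > n) → 0` because regenerations occur, so `π = βπ(J) λ_ν`. At `𝒳` this is
Kac's formula `E_ν T = λ_ν(𝒳) = 1 / (βπ(J))`; applied to `x ↦ g(x) K^(k+1) g(x)` it identifies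
the stationary terms on the right with `βπ(J)` times the block terms on the left.
-/

theorem ENNReal.tsum_mul_sum_range_eq (x : ℕ → ℝ≥0∞) :
    ∑' i, x i * ∑ j ∈ Finset.range i, x j = ∑' j, ∑' k, x j * x (j + k + 1) := by
  have hshift : ∀ j, ∑' i, (if j < i then x i * x j else 0) = ∑' k, x j * x (j + k + 1) := by
    intro j
    rw [← (add_left_injective (j + 1)).tsum_eq]
    · exact tsum_congr fun k => by rw [if_pos (by omega), mul_comm, add_comm k, add_right_comm]
    · intro i hi
      have : j < i := by by_contra h; exact hi (if_neg h)
      exact ⟨i - (j + 1), by simp only; omega⟩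
  calc ∑' i, x i * ∑ j ∈ Finset.range i, x j
      = ∑' i, ∑' j, (if j < i then x i * x j else 0) := by
        refine tsum_congr fun i => ?_
        rw [Finset.mul_sum, sum_eq_tsum_indicator]
        exact tsum_congr fun j => by by_cases h : j < i <;> simp [h]
    _ = ∑' j, ∑' k, x j * x (j + k + 1) := by
        rw [ENNReal.tsum_comm]
        exact tsum_congr hshift

theorem ENNReal.sq_tsum (x : ℕ → ℝ≥0∞) :
    (∑' i, x i) ^ 2 = ∑' i, x i ^ 2 + 2 * ∑' j, ∑' k, x j * x (j + k + 1) := by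
  have hsplit : ∀ i, ∑' j, x j = ∑ j ∈ Finset.range i, x j + x i + ∑' k, x (i + k + 1) := by
    intro i
    rw [← Finset.sum_range_succ, ← ENNReal.summable.sum_add_tsum_nat_add' (k := i + 1)]
    exact congrArg _ (tsum_congr fun k => by rw [add_comm k, add_right_comm])
  calc (∑' i, x i) ^ 2 = ∑' i, x i * ∑' j, x j := by rw [sq, ENNReal.tsum_mul_right]
    _ = ∑' i, x i * ∑ j ∈ Finset.range i, x j + ∑' i, x i ^ 2 +
          ∑' i, ∑' k, x i * x (i + k + 1) := by
        simp_rw [← ENNReal.tsum_add]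
        refine tsum_congr fun i => ?_
        rw [hsplit i, mul_add, mul_add, ← ENNReal.tsum_mul_left, sq]
    _ = _ := by rw [ENNReal.tsum_mul_sum_range_eq]; ring

theorem ENNReal.sq_sum_range (T : ℕ) (y : ℕ → ℝ≥0∞) :
    (∑ i ∈ Finset.range T, y i) ^ 2 = ∑ i ∈ Finset.range T, y i ^ 2 +
      2 * ∑' j, ∑' k, if j + k + 1 < T then y j * y (j + k + 1) else 0 := by
  have htsum : ∀ z : ℕ → ℝ≥0∞, ∑ i ∈ Finset.range T, z i = ∑' i, if i < T then z i else 0 := by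
    intro z
    rw [sum_eq_tsum_indicator]
    exact tsum_congr fun i => by by_cases h : i < T <;> simp [h]
  rw [htsum, htsum, ENNReal.sq_tsum]
  congr 1
  · exact tsum_congr fun i => by split_ifs <;> simp
  · refine congrArg _ (tsum_congr fun j => tsum_congr fun k => ?_)
    split_ifs <;> first | rfl | omega | simp

theorem lintegral_mul_eq_of_setLIntegral_eq {Ω : Type*} {m : MeasurableSpace Ω}
    [m0 : MeasurableSpace Ω] {μ : Measure Ω} (hm : m ≤ m0) {u v : Ω → ℝ≥0∞}
    (hu : Measurable u) (hv : Measurable v)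
    (huv : ∀ s, MeasurableSet[m] s → ∫⁻ ω in s, u ω ∂μ = ∫⁻ ω in s, v ω ∂μ)
    {φ : Ω → ℝ≥0∞} (hφ : Measurable[m] φ) :
    ∫⁻ ω, φ ω * u ω ∂μ = ∫⁻ ω, φ ω * v ω ∂μ := by
  have htrim : (μ.withDensity u).trim hm = (μ.withDensity v).trim hm := by
    refine @Measure.ext _ m _ _ fun s hs => ?_
    rw [trim_measurableSet_eq hm hs, trim_measurableSet_eq hm hs,
      withDensity_apply _ (hm s hs), withDensity_apply _ (hm s hs), huv s hs]
  have hφ' : Measurable φ := hφ.mono hm le_rfl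
  simp_rw [mul_comm (φ _)]
  rw [← Pi.mul_def, ← lintegral_withDensity_eq_lintegral_mul _ hu hφ', ← lintegral_trim hm hφ,
    htrim, lintegral_trim hm hφ, lintegral_withDensity_eq_lintegral_mul _ hv hφ']
  rfl

theorem lintegral_mul_comp_eq_of_indicator {Ω 𝒳 𝒴 : Type*} [MeasurableSpace Ω]
    [MeasurableSpace 𝒳] [MeasurableSpace 𝒴] {μ : Measure Ω} {w v : Ω → ℝ≥0∞}
    (hw : Measurable w) (hv : Measurable v) {Y : Ω → 𝒴} {Z : Ω → 𝒳} (hY : Measurable Y)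
    (hZ : Measurable Z) {κ : Kernel 𝒳 𝒴}
    (h : ∀ A, MeasurableSet A → ∫⁻ ω, w ω * A.indicator 1 (Y ω) ∂μ = ∫⁻ ω, v ω * κ (Z ω) A ∂μ)
    {f : 𝒴 → ℝ≥0∞} (hf : Measurable f) :
    ∫⁻ ω, w ω * f (Y ω) ∂μ = ∫⁻ ω, v ω * ∫⁻ y, f y ∂κ (Z ω) ∂μ := by
  have hleft : ∀ u : 𝒴 → ℝ≥0∞, Measurable u →
      ∫⁻ y, u y ∂(μ.withDensity w).map Y = ∫⁻ ω, w ω * u (Y ω) ∂μ := fun u hu => by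
    rw [lintegral_map hu hY]
    exact lintegral_withDensity_eq_lintegral_mul _ hw (hu.comp hY)
  have hright : ∀ u : 𝒴 → ℝ≥0∞, Measurable u →
      ∫⁻ y, u y ∂κ ∘ₘ (μ.withDensity v).map Z = ∫⁻ ω, v ω * ∫⁻ y, u y ∂κ (Z ω) ∂μ :=
    fun u hu => by
      rw [Measure.lintegral_bind κ.aemeasurable hu.aemeasurable,
        lintegral_map hu.lintegral_kernel hZ]
      exact lintegral_withDensity_eq_lintegral_mul _ hv (hu.lintegral_kernel.comp hZ)
  have hmeas : (μ.withDensity w).map Y = κ ∘ₘ (μ.withDensity v).map Z :=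
    Measure.ext fun A hA => by
      rw [← lintegral_indicator_one hA, ← lintegral_indicator_one hA,
        hleft _ (measurable_one.indicator hA), hright _ (measurable_one.indicator hA), h A hA]
      simp_rw [lintegral_indicator_one hA]
  rw [← hleft f hf, hmeas, hright f hf]

theorem ProbabilityTheory.Kernel.one_eq_id {α : Type*} [MeasurableSpace α] :
    (1 : Kernel α α) = Kernel.id :=
  rfl

theorem ProbabilityTheory.Kernel.exists_eq_add_smul {α β : Type*} [MeasurableSpace α]
    [MeasurableSpace β] (P : Kernel α β) [IsFiniteKernel P] {b : α → ℝ≥0∞} (hb : Measurable b)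
    (ν : Measure β) (hle : ∀ x, b x • ν ≤ P x) :
    ∃ K : Kernel α β, ∀ x, P x = K x + b x • ν := by
  have _ : ∀ x, IsFiniteMeasure (b x • ν) := fun x => isFiniteMeasure_of_le (P x) (hle x)
  let K : Kernel α β :=
    ⟨fun x => P x - b x • ν, Measure.measurable_of_measurable_coe _ fun A hA => by
      simp_rw [Measure.sub_apply hA (hle _), Measure.smul_apply, smul_eq_mul]
      exact (P.measurable_coe hA).sub (hb.mul_const _)⟩
  exact ⟨K, fun x => (Measure.sub_add_cancel_of_le (hle x)).symm⟩

section OccupationMeasure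

open Filter Topology

variable {α : Type*} [MeasurableSpace α] {K : Kernel α α} {π ν : Measure α} {c : ℝ≥0∞}

/-- For the residual kernel of a split chain started from `ρ`, the expected number of visits to a
set before the first regeneration. -/
noncomputable def occupationMeasure (K : Kernel α α) (ρ : Measure α) : Measure α :=
  Measure.sum fun n => (K ^ n : Kernel α α) ∘ₘ ρ

theorem ProbabilityTheory.Kernel.Invariant.eq_comp_add_smul {P : Kernel α α}
    {b : α → ℝ≥0∞} (hinv : P.Invariant π) (hb : Measurable b)
    (hK : ∀ x, P x = K x + b x • ν) : π = K ∘ₘ π + (∫⁻ x, b x ∂π) • ν := by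
  ext A hA
  conv_lhs => rw [← hinv.def]
  rw [Measure.bind_apply hA P.aemeasurable, Measure.add_apply, Measure.bind_apply hA K.aemeasurable,
    Measure.smul_apply, smul_eq_mul, ← lintegral_mul_const _ hb,
    ← lintegral_add_left (K.measurable_coe hA)]
  exact lintegral_congr fun x => by simp [hK x]

theorem eq_pow_comp_add_smul_sum (h : π = K ∘ₘ π + c • ν) (n : ℕ) :
    π = (K ^ n : Kernel α α) ∘ₘ π + c • ∑ j ∈ Finset.range n, (K ^ j : Kernel α α) ∘ₘ ν := by
  induction n with
  | zero => simp [Kernel.one_eq_id]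
  | succ n ih =>
    have hstep : (K ^ n : Kernel α α) ∘ₘ π =
        (K ^ (n + 1) : Kernel α α) ∘ₘ π + c • (K ^ n : Kernel α α) ∘ₘ ν := by
      conv_lhs => rw [h]
      rw [Measure.comp_add, Measure.comp_smul, Measure.comp_assoc, pow_succ]
      rfl
    rw [Finset.sum_range_succ, smul_add, ← add_assoc, add_right_comm, ← hstep]
    exact ih

theorem eq_smul_occupationMeasure_of_tendsto (h : π = K ∘ₘ π + c • ν) (hc : c ≠ ∞)
    (htail : Tendsto (fun n => ((K ^ n : Kernel α α) ∘ₘ π) Set.univ) atTop (𝓝 0)) :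
    π = c • occupationMeasure K ν := by
  ext A hA
  rw [Measure.smul_apply, occupationMeasure, Measure.sum_apply _ hA, smul_eq_mul]
  have hlim : Tendsto (fun n => ((K ^ n : Kernel α α) ∘ₘ π) A +
      c * ∑ j ∈ Finset.range n, ((K ^ j : Kernel α α) ∘ₘ ν) A) atTop
      (𝓝 (0 + c * ∑' j, ((K ^ j : Kernel α α) ∘ₘ ν) A)) :=
    (tendsto_of_tendsto_of_tendsto_of_le_of_le tendsto_const_nhds htail (fun _ => zero_le)
      fun _ => measure_mono (Set.subset_univ A)).add
      (ENNReal.Tendsto.const_mul (ENNReal.tendsto_nat_tsum _) (Or.inr hc))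
  rw [zero_add] at hlim
  refine tendsto_nhds_unique (tendsto_const_nhds.congr fun n => ?_) hlim
  conv_lhs => rw [eq_pow_comp_add_smul_sum h n]
  rw [Measure.add_apply, Measure.smul_apply, Measure.finsetSum_apply, smul_eq_mul]

end OccupationMeasure

noncomputable def splitProb {𝒳 : Type*} (J : Set 𝒳) (β : ℝ) (x : 𝒳) : ℝ≥0∞ :=
  ENNReal.ofReal β * J.indicator (fun _ => 1) x

/-- The event `{T > n}`. -/
def noRegenSet {Ω : Type*} (G : ℕ → Ω → Bool) (n : ℕ) : Set Ω :=
  {ω | ∀ i < n, G i ω = false}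

section SplitProb

variable {𝒳 : Type*} [MeasurableSpace 𝒳] {J : Set 𝒳} {β : ℝ}

theorem measurable_splitProb (hJ : MeasurableSet J) : Measurable (splitProb J β) :=
  measurable_const.mul (measurable_const.indicator hJ)

theorem lintegral_splitProb (hJ : MeasurableSet J) (ρ : Measure 𝒳) :
    ∫⁻ x, splitProb J β x ∂ρ = ENNReal.ofReal β * ρ J := by
  unfold splitProb
  rw [lintegral_const_mul _ (measurable_const.indicator hJ)]
  exact congrArg _ (lintegral_indicator_one hJ)

end SplitProb

section NoRegenSet

variable {Ω : Type*} {G : ℕ → Ω → Bool}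

theorem noRegenSet_zero : noRegenSet G 0 = Set.univ :=
  Set.eq_univ_of_forall fun _ i hi => absurd hi (Nat.not_lt_zero i)

theorem noRegenSet_succ (n : ℕ) :
    noRegenSet G (n + 1) = noRegenSet G n ∩ {ω | G n ω = false} := by
  ext ω
  simp only [noRegenSet, Set.mem_ofPred_eq, Set.mem_inter_iff, Nat.lt_succ_iff_lt_or_eq]
  exact ⟨fun h => ⟨fun i hi => h i (Or.inl hi), h n (Or.inr rfl)⟩,
    fun h i hi => hi.elim (h.1 i) fun e => e ▸ h.2⟩

theorem antitone_noRegenSet : Antitone (noRegenSet G) :=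
  fun _ _ hmn _ hω i hi => hω i (hi.trans_le hmn)

theorem indicator_noRegenSet_succ_apply {M : Type*} [One M] [Zero M] (k : ℕ) (ω : Ω) :
    (noRegenSet G (k + 1)).indicator (1 : Ω → M) ω = if ∀ i ≤ k, G i ω = false then 1 else 0 := by
  simp [Set.indicator_apply, noRegenSet]

theorem lt_regTime_one_iff {ω : Ω} (hω : ∃ n, 0 < n ∧ G (n - 1) ω = true) (i : ℕ) :
    i < regTime G 1 ω ↔ ω ∈ noRegenSet G i := by
  obtain ⟨hpos, hreg⟩ := Nat.sInf_mem (s := {n | 0 < n ∧ G (n - 1) ω = true}) hω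
  change i < sInf {n | 0 < n ∧ G (n - 1) ω = true} ↔ _
  constructor
  · intro hi j hj
    by_contra hGj
    have : sInf {n | 0 < n ∧ G (n - 1) ω = true} ≤ j + 1 :=
      Nat.sInf_le ⟨j.succ_pos, by simpa using hGj⟩
    omega
  · intro hnoreg
    by_contra hi
    have := hnoreg _ (by omega : sInf {n | 0 < n ∧ G (n - 1) ω = true} - 1 < i)
    simp [hreg] at this

theorem sum_range_regTime_one_eq_tsum {ω : Ω} (hω : ∃ n, 0 < n ∧ G (n - 1) ω = true)
    (y : ℕ → ℝ≥0∞) :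
    ∑ i ∈ Finset.range (regTime G 1 ω), y i = ∑' i, (noRegenSet G i).indicator 1 ω * y i := by
  rw [sum_eq_tsum_indicator]
  refine tsum_congr fun i => ?_
  by_cases hi : i < regTime G 1 ω
  · simp [hi, (lt_regTime_one_iff hω i).1 hi]
  · simp [hi, mt (lt_regTime_one_iff hω i).2 hi]

end NoRegenSet

section PastSigmaAlgebras

variable {Ω 𝒳 : Type*} [MeasurableSpace 𝒳] {X : ℕ → Ω → 𝒳} {G : ℕ → Ω → Bool}

theorem measurable_pastBeforeG_X {n m : ℕ} (hm : m ≤ n) : Measurable[pastBeforeG X G n] (X m) :=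
  Measurable.of_comap_le (le_sup_of_le_left (le_iSup₂_of_le m (Set.mem_Iic.2 hm) le_rfl))

theorem measurable_pastBeforeG_G {n i : ℕ} (hi : i < n) : Measurable[pastBeforeG X G n] (G i) :=
  Measurable.of_comap_le (le_sup_of_le_right (le_iSup₂_of_le i (Set.mem_Iio.2 hi) le_rfl))

theorem measurable_pastXG_G (n : ℕ) : Measurable[pastXG X G n] (G n) :=
  Measurable.of_comap_le (le_sup_of_le_right (le_iSup₂_of_le n (Set.mem_Iic.2 le_rfl) le_rfl))

theorem pastBeforeG_le_pastXG (n : ℕ) : pastBeforeG X G n ≤ pastXG X G n :=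
  sup_le_sup_left (iSup₂_le fun i hi =>
    le_iSup₂_of_le (f := fun i (_ : i ∈ Set.Iic n) => MeasurableSpace.comap (G i) inferInstance)
      i (Set.Iio_subset_Iic_self hi) le_rfl) _

theorem pastXG_le [mΩ : MeasurableSpace Ω] (hX : ∀ n, Measurable (X n))
    (hG : ∀ n, Measurable (G n)) (n : ℕ) : pastXG X G n ≤ mΩ :=
  sup_le (iSup₂_le fun i _ => (hX i).comap_le) (iSup₂_le fun i _ => (hG i).comap_le)

theorem measurableSet_pastBeforeG_noRegenSet (n : ℕ) :
    MeasurableSet[pastBeforeG X G n] (noRegenSet G n) := by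
  have : noRegenSet G n = ⋂ i ∈ Set.Iio n, G i ⁻¹' {false} := by
    ext ω
    simp [noRegenSet]
  rw [this]
  exact MeasurableSet.biInter (Set.to_countable _) fun i hi =>
    measurable_pastBeforeG_G (X := X) hi (measurableSet_singleton false)

end PastSigmaAlgebras

section SplitChain

open Filter Topology

variable {Ω 𝒳 : Type*} [MeasurableSpace Ω] [MeasurableSpace 𝒳] {μ : Measure Ω}
  {P : Kernel 𝒳 𝒳} {J : Set 𝒳} {β : ℝ} {ν : Measure 𝒳} {X : ℕ → Ω → 𝒳} {G : ℕ → Ω → Bool}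
  {K : Kernel 𝒳 𝒳}

theorem IsSplitChain.measurableSet_noRegenSet (hc : IsSplitChain μ P J β ν X G) (n : ℕ) :
    MeasurableSet (noRegenSet G n) :=
  (pastBeforeG_le_pastXG n).trans (pastXG_le hc.measX hc.measG n) _
    (measurableSet_pastBeforeG_noRegenSet n)

theorem splitProb_le_one [IsMarkovKernel P] [IsProbabilityMeasure ν]
    (hK : ∀ x, P x = K x + splitProb J β x • ν) (x : 𝒳) : splitProb J β x ≤ 1 :=
  calc splitProb J β x = (splitProb J β x • ν) Set.univ := by simp
    _ ≤ P x Set.univ := by rw [hK x, Measure.add_apply]; exact le_add_self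
    _ = 1 := measure_univ

/-- Where `splitProb J β x = 1`, `residualKer` divides by zero; the identity still holds because
then `K x = 0`. -/
theorem one_sub_splitProb_mul_residualKer [IsMarkovKernel P] [IsProbabilityMeasure ν]
    (hK : ∀ x, P x = K x + splitProb J β x • ν) (x : 𝒳) (A : Set 𝒳) :
    (1 - splitProb J β x) * residualKer P J β ν x A = K x A := by
  have hP : ∀ A, P x A = K x A + splitProb J β x * ν A := fun A => by simp [hK x]
  have hb := splitProb_le_one hK x
  change (1 - splitProb J β x) * ((P x A - splitProb J β x * ν A) / (1 - splitProb J β x)) = _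
  rw [hP, ENNReal.add_sub_cancel_right
    (ENNReal.mul_ne_top (hb.trans_lt ENNReal.one_lt_top).ne (measure_ne_top ν A))]
  rcases hb.lt_or_eq with hlt | heq
  · exact ENNReal.mul_div_cancel (tsub_pos_of_lt hlt).ne' (by simp)
  · have hKx : K x Set.univ = 0 := by
      refine (ENNReal.add_left_inj ENNReal.one_ne_top).1 ?_
      simpa [heq] using (hP Set.univ).symm
    rw [heq, tsub_self, zero_mul, measure_mono_null (Set.subset_univ A) hKx]

theorem measurable_residualKer (hJ : MeasurableSet J) {A : Set 𝒳} (hA : MeasurableSet A) :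
    Measurable fun x => residualKer P J β ν x A := by
  have := P.measurable_coe hA
  have : Measurable (J.indicator fun _ => (1 : ℝ≥0∞)) := measurable_const.indicator hJ
  unfold residualKer
  fun_prop

theorem IsSplitChain.lintegral_mul_indicator_G_false [IsFiniteMeasure μ] [IsMarkovKernel P]
    [IsProbabilityMeasure ν] (hc : IsSplitChain μ P J β ν X G) (hJ : MeasurableSet J)
    (hK : ∀ x, P x = K x + splitProb J β x • ν) (n : ℕ) {φ : Ω → ℝ≥0∞}
    (hφ : Measurable[pastBeforeG X G n] φ) :
    ∫⁻ ω, φ ω * {ω | G n ω = false}.indicator 1 ω ∂μ =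
      ∫⁻ ω, φ ω * (1 - splitProb J β (X n ω)) ∂μ := by
  have hm := (pastBeforeG_le_pastXG n).trans (pastXG_le hc.measX hc.measG n)
  have hGt : MeasurableSet {ω | G n ω = true} := hc.measG n (measurableSet_singleton true)
  have hGf : MeasurableSet {ω | G n ω = false} := hc.measG n (measurableSet_singleton false)
  have hb : Measurable fun ω => splitProb J β (X n ω) :=
    (measurable_splitProb hJ).comp (hc.measX n)
  refine lintegral_mul_eq_of_setLIntegral_eq hm (u := {ω | G n ω = false}.indicator 1)
    (v := fun ω => 1 - splitProb J β (X n ω)) (measurable_one.indicator hGf)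
    (measurable_const.sub hb) (fun s hs => ?_) hφ
  have htrue : μ.restrict s {ω | G n ω = true} = ∫⁻ ω in s, splitProb J β (X n ω) ∂μ := by
    rw [Measure.restrict_apply hGt, Set.inter_comm]
    exact hc.condG n s hs
  have hcompl : {ω | G n ω = false} = {ω | G n ω = true}ᶜ := by ext; simp
  rw [lintegral_indicator_one hGf, hcompl, measure_compl hGt (measure_ne_top _ _), htrue,
    lintegral_sub hb (htrue ▸ measure_ne_top _ _) (ae_of_all _ fun ω => splitProb_le_one hK _),
    Measure.restrict_apply_univ, setLIntegral_one]

theorem IsSplitChain.lintegral_mul_indicator_X_succ (hc : IsSplitChain μ P J β ν X G)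
    (hJ : MeasurableSet J) (n : ℕ) {A : Set 𝒳} (hA : MeasurableSet A) {φ : Ω → ℝ≥0∞}
    (hφ : Measurable[pastXG X G n] φ) :
    ∫⁻ ω, φ ω * A.indicator 1 (X (n + 1) ω) ∂μ =
      ∫⁻ ω, φ ω * (if G n ω = true then ν A else residualKer P J β ν (X n ω) A) ∂μ := by
  have hQ := measurable_residualKer (ν := ν) (β := β) hJ hA (P := P)
  refine lintegral_mul_eq_of_setLIntegral_eq (pastXG_le hc.measX hc.measG n)
    (u := fun ω => A.indicator 1 (X (n + 1) ω))
    (v := fun ω => if G n ω = true then ν A else residualKer P J β ν (X n ω) A)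
    ((measurable_one.indicator hA).comp (hc.measX (n + 1)))
    (Measurable.ite (hc.measG n (measurableSet_singleton true)) measurable_const
      (hQ.comp (hc.measX n))) (fun s hs => ?_) hφ
  change ∫⁻ ω in s, (X (n + 1) ⁻¹' A).indicator 1 ω ∂μ = _
  rw [← hc.condX n A hA s hs, lintegral_indicator_one (hc.measX (n + 1) hA),
    Measure.restrict_apply (hc.measX (n + 1) hA), Set.inter_comm]

/-- A step without regeneration is a step of `K`: by `condX` the step is `Q(Xₙ, ·)` on
`{Γₙ = 0}`, by `condG` that event has conditional probability `1 - β 1_J(Xₙ)`, and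
`(1 - β 1_J) Q = K`. -/
theorem IsSplitChain.lintegral_mul_indicator_G_false_mul [IsFiniteMeasure μ] [IsMarkovKernel P]
    [IsProbabilityMeasure ν] (hc : IsSplitChain μ P J β ν X G) (hJ : MeasurableSet J)
    (hK : ∀ x, P x = K x + splitProb J β x • ν) (n : ℕ) {ψ : Ω → ℝ≥0∞}
    (hψ : Measurable[pastBeforeG X G n] ψ) {f : 𝒳 → ℝ≥0∞} (hf : Measurable f) :
    ∫⁻ ω, ψ ω * ({ω | G n ω = false}.indicator 1 ω * f (X (n + 1) ω)) ∂μ =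
      ∫⁻ ω, ψ ω * ∫⁻ y, f y ∂K (X n ω) ∂μ := by
  have hm := pastXG_le hc.measX hc.measG n
  have hGf : Measurable[pastXG X G n] ({ω | G n ω = false}.indicator (1 : Ω → ℝ≥0∞)) :=
    (measurable_const (a := (1 : ℝ≥0∞))).indicator
      (measurable_pastXG_G n (measurableSet_singleton false))
  have hψX : Measurable[pastXG X G n] ψ := hψ.mono (pastBeforeG_le_pastXG n) le_rfl
  have hsets : ∀ A, MeasurableSet A →
      ∫⁻ ω, ψ ω * {ω | G n ω = false}.indicator 1 ω * A.indicator 1 (X (n + 1) ω) ∂μ =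
        ∫⁻ ω, ψ ω * K (X n ω) A ∂μ := fun A hA =>
    calc _ = ∫⁻ ω, ψ ω * {ω | G n ω = false}.indicator 1 ω *
            (if G n ω = true then ν A else residualKer P J β ν (X n ω) A) ∂μ :=
          hc.lintegral_mul_indicator_X_succ hJ n hA (hψX.mul hGf)
      _ = ∫⁻ ω, ψ ω * residualKer P J β ν (X n ω) A * {ω | G n ω = false}.indicator 1 ω ∂μ := by
          refine lintegral_congr fun ω => ?_
          cases h : G n ω <;> simp [h]
      _ = ∫⁻ ω, ψ ω * K (X n ω) A ∂μ := by
          rw [hc.lintegral_mul_indicator_G_false hJ hK n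
            (φ := fun ω => ψ ω * residualKer P J β ν (X n ω) A)
            (hψ.mul ((measurable_residualKer hJ hA).comp (measurable_pastBeforeG_X le_rfl)))]
          simp_rw [mul_assoc, mul_comm (residualKer _ _ _ _ _ _),
            one_sub_splitProb_mul_residualKer hK]
  simp_rw [← mul_assoc]
  exact lintegral_mul_comp_eq_of_indicator ((hψX.mul hGf).mono hm le_rfl)
    (hψX.mono hm le_rfl) (hc.measX _) (hc.measX n) hsets hf

theorem IsSplitChain.lintegral_indicator_noRegenSet_mul_mul [IsFiniteMeasure μ]
    [IsMarkovKernel P] [IsProbabilityMeasure ν] (hc : IsSplitChain μ P J β ν X G)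
    (hJ : MeasurableSet J) (hK : ∀ x, P x = K x + splitProb J β x • ν) (m d : ℕ)
    {g f : 𝒳 → ℝ≥0∞} (hg : Measurable g) (hf : Measurable f) :
    ∫⁻ ω, (noRegenSet G (m + d)).indicator 1 ω * (g (X m ω) * f (X (m + d) ω)) ∂μ =
      ∫⁻ ω, (noRegenSet G m).indicator 1 ω * (g (X m ω) * ∫⁻ y, f y ∂(K ^ d) (X m ω)) ∂μ := by
  induction d generalizing f with
  | zero =>
    simp_rw [pow_zero, Kernel.one_eq_id, Kernel.id_apply,
      lintegral_dirac' _ hf, add_zero]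
  | succ d ih =>
    have hψ : Measurable[pastBeforeG X G (m + d)]
        fun ω => (noRegenSet G (m + d)).indicator 1 ω * g (X m ω) :=
      ((measurable_const (a := (1 : ℝ≥0∞))).indicator
        (measurableSet_pastBeforeG_noRegenSet _)).mul
        (hg.comp (measurable_pastBeforeG_X (Nat.le_add_right m d)))
    calc _ = ∫⁻ ω, ((noRegenSet G (m + d)).indicator 1 ω * g (X m ω)) *
          ({ω | G (m + d) ω = false}.indicator 1 ω * f (X (m + d + 1) ω)) ∂μ := by
          simp_rw [← add_assoc, noRegenSet_succ, Set.inter_indicator_one, Pi.mul_apply]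
          exact lintegral_congr fun ω => by ring
      _ = ∫⁻ ω, (noRegenSet G (m + d)).indicator 1 ω *
          (g (X m ω) * ∫⁻ y, f y ∂K (X (m + d) ω)) ∂μ := by
          rw [hc.lintegral_mul_indicator_G_false_mul hJ hK (m + d) hψ hf]
          exact lintegral_congr fun ω => mul_assoc _ _ _
      _ = _ := by
          have hpow : K ^ (d + 1) = K ∘ₖ (K ^ d) := pow_succ' K d
          rw [ih hf.lintegral_kernel, hpow]
          simp_rw [Kernel.lintegral_comp _ _ _ hf]

theorem IsSplitChain.lintegral_indicator_noRegenSet_mul [IsFiniteMeasure μ]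
    [IsMarkovKernel P] [IsProbabilityMeasure ν] (hc : IsSplitChain μ P J β ν X G)
    (hJ : MeasurableSet J) (hK : ∀ x, P x = K x + splitProb J β x • ν) (n : ℕ)
    {f : 𝒳 → ℝ≥0∞} (hf : Measurable f) :
    ∫⁻ ω, (noRegenSet G n).indicator 1 ω * f (X n ω) ∂μ =
      ∫⁻ x, f x ∂(K ^ n : Kernel 𝒳 𝒳) ∘ₘ μ.map (X 0) := by
  have h :=
    hc.lintegral_indicator_noRegenSet_mul_mul hJ hK 0 n (g := fun _ => 1) measurable_const hf
  simp only [zero_add, noRegenSet_zero, Set.indicator_univ, Pi.one_apply, one_mul] at h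
  rw [h, Measure.lintegral_bind (K ^ n).aemeasurable hf.aemeasurable,
    lintegral_map hf.lintegral_kernel (hc.measX 0)]

theorem IsSplitChain.lintegral_indicator_noRegenSet_add_mul_mul [IsFiniteMeasure μ]
    [IsMarkovKernel P] [IsProbabilityMeasure ν] (hc : IsSplitChain μ P J β ν X G)
    (hJ : MeasurableSet J) (hK : ∀ x, P x = K x + splitProb J β x • ν) (m d : ℕ)
    {g f : 𝒳 → ℝ≥0∞} (hg : Measurable g) (hf : Measurable f) :
    ∫⁻ ω, (noRegenSet G (m + d)).indicator 1 ω * (g (X m ω) * f (X (m + d) ω)) ∂μ =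
      ∫⁻ x, g x * ∫⁻ y, f y ∂(K ^ d) x ∂(K ^ m : Kernel 𝒳 𝒳) ∘ₘ μ.map (X 0) := by
  rw [hc.lintegral_indicator_noRegenSet_mul_mul hJ hK m d hg hf]
  exact hc.lintegral_indicator_noRegenSet_mul hJ hK m (f := fun x => g x * ∫⁻ y, f y ∂(K ^ d) x)
    (hg.mul hf.lintegral_kernel)

theorem IsSplitChain.lintegral_comp_zero_mul_comp_succ_mul_ite [IsFiniteMeasure μ]
    [IsMarkovKernel P] [IsProbabilityMeasure ν] (hc : IsSplitChain μ P J β ν X G)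
    (hJ : MeasurableSet J) (hK : ∀ x, P x = K x + splitProb J β x • ν) (k : ℕ)
    {g f : 𝒳 → ℝ≥0∞} (hg : Measurable g) (hf : Measurable f) :
    ∫⁻ ω, g (X 0 ω) * f (X (k + 1) ω) * (if ∀ i ≤ k, G i ω = false then 1 else 0) ∂μ =
      ∫⁻ x, g x * ∫⁻ y, f y ∂(K ^ (k + 1)) x ∂μ.map (X 0) := by
  have h := hc.lintegral_indicator_noRegenSet_add_mul_mul hJ hK 0 (k + 1) hg hf
  rw [zero_add, pow_zero, Kernel.one_eq_id, Measure.id_comp] at h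
  rw [← h]
  exact lintegral_congr fun ω => by rw [indicator_noRegenSet_succ_apply]; ring

theorem IsSplitChain.lintegral_sum_range_regTime_one [IsFiniteMeasure μ]
    [IsMarkovKernel P] [IsProbabilityMeasure ν] (hc : IsSplitChain μ P J β ν X G)
    (hJ : MeasurableSet J) (hK : ∀ x, P x = K x + splitProb J β x • ν)
    {f : 𝒳 → ℝ≥0∞} (hf : Measurable f) :
    ∫⁻ ω, ∑ i ∈ Finset.range (regTime G 1 ω), f (X i ω) ∂μ =
      ∫⁻ x, f x ∂occupationMeasure K (μ.map (X 0)) := by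
  have hae : ∀ᵐ ω ∂μ, ∑ i ∈ Finset.range (regTime G 1 ω), f (X i ω) =
      ∑' i, (noRegenSet G i).indicator 1 ω * f (X i ω) := by
    filter_upwards [hc.recur] with ω hω
    exact sum_range_regTime_one_eq_tsum (hω 0) _
  rw [lintegral_congr_ae hae, lintegral_tsum, occupationMeasure, lintegral_sum_measure]
  · exact tsum_congr fun i => hc.lintegral_indicator_noRegenSet_mul hJ hK i hf
  · exact fun i => ((measurable_one.indicator (hc.measurableSet_noRegenSet i)).mul
      (hf.comp (hc.measX i))).aemeasurable

theorem IsSplitChain.lintegral_regTime_one [IsFiniteMeasure μ] [IsMarkovKernel P]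
    [IsProbabilityMeasure ν] (hc : IsSplitChain μ P J β ν X G) (hJ : MeasurableSet J)
    (hK : ∀ x, P x = K x + splitProb J β x • ν) :
    ∫⁻ ω, (regTime G 1 ω : ℝ≥0∞) ∂μ = occupationMeasure K (μ.map (X 0)) Set.univ := by
  simpa using hc.lintegral_sum_range_regTime_one hJ hK (f := fun _ => 1) measurable_const

theorem IsSplitChain.lintegral_sq_sum_range_regTime_one [IsFiniteMeasure μ]
    [IsMarkovKernel P] [IsProbabilityMeasure ν] (hc : IsSplitChain μ P J β ν X G)
    (hJ : MeasurableSet J) (hK : ∀ x, P x = K x + splitProb J β x • ν)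
    {f : 𝒳 → ℝ≥0∞} (hf : Measurable f) :
    ∫⁻ ω, (∑ i ∈ Finset.range (regTime G 1 ω), f (X i ω)) ^ 2 ∂μ =
      ∫⁻ x, f x ^ 2 ∂occupationMeasure K (μ.map (X 0)) +
        2 * ∑' k, ∫⁻ x, f x * ∫⁻ y, f y ∂(K ^ (k + 1)) x ∂occupationMeasure K (μ.map (X 0)) := by
  have hterm : ∀ j k, Measurable fun ω =>
      (noRegenSet G (j + k + 1)).indicator 1 ω * (f (X j ω) * f (X (j + k + 1) ω)) :=
    fun j k => (measurable_one.indicator (hc.measurableSet_noRegenSet _)).mul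
      ((hf.comp (hc.measX _)).mul (hf.comp (hc.measX _)))
  have hcross : Measurable fun ω => ∑' j, ∑' k,
      (noRegenSet G (j + k + 1)).indicator 1 ω * (f (X j ω) * f (X (j + k + 1) ω)) :=
    Measurable.tsum fun j => Measurable.tsum (hterm j)
  have hae : ∀ᵐ ω ∂μ, (∑ i ∈ Finset.range (regTime G 1 ω), f (X i ω)) ^ 2 =
      ∑ i ∈ Finset.range (regTime G 1 ω), f (X i ω) ^ 2 + 2 * ∑' j, ∑' k,
        (noRegenSet G (j + k + 1)).indicator 1 ω * (f (X j ω) * f (X (j + k + 1) ω)) := by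
    filter_upwards [hc.recur] with ω hω
    rw [ENNReal.sq_sum_range]
    refine congrArg (_ + 2 * ·) (tsum_congr fun j => tsum_congr fun k => ?_)
    by_cases hlt : j + k + 1 < regTime G 1 ω
    · rw [if_pos hlt, Set.indicator_of_mem ((lt_regTime_one_iff (hω 0) _).1 hlt), Pi.one_apply,
        one_mul]
    · rw [if_neg hlt, Set.indicator_of_notMem (mt (lt_regTime_one_iff (hω 0) _).2 hlt),
        zero_mul]
  rw [lintegral_congr_ae hae, lintegral_add_right _ (hcross.const_mul 2),
    lintegral_const_mul _ hcross, hc.lintegral_sum_range_regTime_one hJ hK (hf.pow_const 2),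
    lintegral_tsum fun j => (Measurable.tsum (hterm j)).aemeasurable]
  congr 2
  calc ∑' j, ∫⁻ ω, ∑' k,
        (noRegenSet G (j + k + 1)).indicator 1 ω * (f (X j ω) * f (X (j + k + 1) ω)) ∂μ
      = ∑' j, ∑' k, ∫⁻ x, f x * ∫⁻ y, f y ∂(K ^ (k + 1)) x
          ∂(K ^ j : Kernel 𝒳 𝒳) ∘ₘ μ.map (X 0) := by
        refine tsum_congr fun j => ?_
        rw [lintegral_tsum fun k => (hterm j k).aemeasurable]
        exact tsum_congr fun k =>
          hc.lintegral_indicator_noRegenSet_add_mul_mul hJ hK j (k + 1) hf hf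
    _ = _ := by
        rw [ENNReal.tsum_comm]
        exact tsum_congr fun k => (lintegral_sum_measure _ _).symm

theorem IsSplitChain.tendsto_pow_comp_map_univ [IsFiniteMeasure μ]
    [IsMarkovKernel P] [IsProbabilityMeasure ν] (hc : IsSplitChain μ P J β ν X G)
    (hJ : MeasurableSet J) (hK : ∀ x, P x = K x + splitProb J β x • ν) :
    Tendsto (fun n => ((K ^ n : Kernel 𝒳 𝒳) ∘ₘ μ.map (X 0)) Set.univ) atTop (𝓝 0) := by
  have hS : ∀ n, ((K ^ n : Kernel 𝒳 𝒳) ∘ₘ μ.map (X 0)) Set.univ = μ (noRegenSet G n) := by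
    intro n
    have h := hc.lintegral_indicator_noRegenSet_mul hJ hK n (f := fun _ => 1) measurable_const
    simpa [lintegral_indicator_one (hc.measurableSet_noRegenSet n)] using h.symm
  have hnull : μ (⋂ n, noRegenSet G n) = 0 := by
    refine measure_mono_null (fun ω hω => ?_) (ae_iff.1 hc.recur)
    intro hreg
    obtain ⟨n, hn, hGn⟩ := hreg 0
    simpa [hGn] using Set.mem_iInter.1 hω n (n - 1) (by omega)
  simp_rw [hS, ← hnull]
  exact tendsto_measure_iInter_atTop (fun n => (hc.measurableSet_noRegenSet n).nullMeasurableSet)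
    antitone_noRegenSet ⟨0, measure_ne_top μ _⟩

theorem IsSplitChain.eq_smul_occupationMeasure [IsFiniteMeasure μ] [IsMarkovKernel P]
    [IsProbabilityMeasure ν] {π : Measure 𝒳} [IsFiniteMeasure π]
    (hc : IsSplitChain μ P J β ν X G) (hJ : MeasurableSet J)
    (hK : ∀ x, P x = K x + splitProb J β x • ν) (hX0 : μ.map (X 0) = π)
    (hinv : P.Invariant π) :
    π = (ENNReal.ofReal β * π J) • occupationMeasure K ν := by
  refine eq_smul_occupationMeasure_of_tendsto ?_ (ENNReal.mul_ne_top ENNReal.ofReal_ne_top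
    (measure_ne_top π J)) (hX0 ▸ hc.tendsto_pow_comp_map_univ hJ hK)
  rw [← lintegral_splitProb hJ]
  exact hinv.eq_comp_add_smul (measurable_splitProb hJ) hK

end SplitChain

theorem block_second_moment_identity_general
    {Ω Ω' 𝒳 : Type*} [MeasurableSpace Ω] [MeasurableSpace Ω'] [MeasurableSpace 𝒳]
    (μν : Measure Ω) [IsProbabilityMeasure μν]
    (μπ : Measure Ω') [IsProbabilityMeasure μπ]
    (P : Kernel 𝒳 𝒳) [IsMarkovKernel P]
    (π ν : Measure 𝒳) [IsProbabilityMeasure π] [IsProbabilityMeasure ν]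
    (hinv : Kernel.Invariant P π)
    (J : Set 𝒳) (hJmeas : MeasurableSet J)
    (β : ℝ)
    (hsmall : ∀ x, ∀ A : Set 𝒳, MeasurableSet A →
      ENNReal.ofReal β * J.indicator (fun _ => (1 : ℝ≥0∞)) x * ν A ≤ P x A)
    (X : ℕ → Ω → 𝒳) (G : ℕ → Ω → Bool)
    (hchain : IsSplitChain μν P J β ν X G)
    (hX0 : μν.map (X 0) = ν)
    (X' : ℕ → Ω' → 𝒳) (G' : ℕ → Ω' → Bool)
    (hchain' : IsSplitChain μπ P J β ν X' G')
    (hX0' : μπ.map (X' 0) = π)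
    (g : 𝒳 → ℝ) (hgmeas : Measurable g) (hgpos : ∀ x, 0 ≤ g x) :
    (∫⁻ ω, (regTime G 1 ω : ℝ≥0∞) ∂μν) = (ENNReal.ofReal β * π J)⁻¹ ∧
    ∫⁻ ω, (ENNReal.ofReal (blockSum1 g X G ω)) ^ 2 ∂μν =
      (∫⁻ ω, (regTime G 1 ω : ℝ≥0∞) ∂μν) *
        ((∫⁻ ω', (ENNReal.ofReal (g (X' 0 ω'))) ^ 2 ∂μπ) +
          2 * ∑' k : ℕ, ∫⁻ ω',
            ENNReal.ofReal (g (X' 0 ω')) * ENNReal.ofReal (g (X' (k + 1) ω')) *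
              (if ∀ i ≤ k, G' i ω' = false then 1 else 0) ∂μπ) := by
  obtain ⟨K, hK⟩ := P.exists_eq_add_smul (measurable_splitProb hJmeas) ν fun x =>
    Measure.le_iff.2 fun A hA => by rw [Measure.smul_apply, smul_eq_mul]; exact hsmall x A hA
  have hF : Measurable fun x => ENNReal.ofReal (g x) := hgmeas.ennreal_ofReal
  set a := ENNReal.ofReal β * π J
  have hπ : ∀ {f : 𝒳 → ℝ≥0∞}, ∫⁻ x, f x ∂π = a * ∫⁻ x, f x ∂occupationMeasure K ν := by
    intro f
    conv_lhs => rw [hchain'.eq_smul_occupationMeasure hJmeas hK hX0' hinv]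
    exact lintegral_smul_measure _ _
  have ha : a * occupationMeasure K ν Set.univ = 1 := by simpa using (hπ (f := fun _ => 1)).symm
  have hKac : ∫⁻ ω, (regTime G 1 ω : ℝ≥0∞) ∂μν = a⁻¹ := by
    rw [hchain.lintegral_regTime_one hJmeas hK, hX0]
    exact ENNReal.eq_inv_of_mul_eq_one_left (mul_comm a _ ▸ ha)
  refine ⟨hKac, ?_⟩
  simp_rw [blockSum1, ENNReal.ofReal_sum_of_nonneg fun i _ => hgpos _,
    hchain'.lintegral_comp_zero_mul_comp_succ_mul_ite hJmeas hK _ hF hF]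
  rw [hchain.lintegral_sq_sum_range_regTime_one hJmeas hK hF, hX0, hKac,
    ← lintegral_map (hF.pow_const 2) (hchain'.measX 0), hX0']
  simp only [hπ, ENNReal.tsum_mul_left]
  rw [mul_left_comm 2 a, ← mul_add, ← mul_assoc, ENNReal.inv_mul_cancel
    (left_ne_zero_of_mul_eq_one ha) (ENNReal.mul_ne_top ENNReal.ofReal_ne_top (measure_ne_top _ _)),
    one_mul]

/-- **Proposition 6.1 (block second-moment identity)**: for any nonnegative measurable
`g : 𝒳 → [0,∞)`, with the split chain started from `X 0 ∼ ν` on one side and from the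
stationary distribution `X' 0 ∼ π` on the other,
`E_ν[Ξ₁(g)²] = m · (E_π[g(X_0)²] + 2 ∑_{n=1}^∞ E_π[g(X_0) g(X_n) 1{T > n}])`,
where `m = E_ν τ₁ = 1/(β·π(J))` (Kac's theorem) and `T` is the first regeneration time
(so that `T > n` iff none of `Γ_0, …, Γ_{n−1}` equals 1). -/
theorem block_second_moment_identity
    {Ω Ω' 𝒳 : Type*} [MeasurableSpace Ω] [MeasurableSpace Ω'] [MeasurableSpace 𝒳]
    (μν : Measure Ω) [IsProbabilityMeasure μν]
    (μπ : Measure Ω') [IsProbabilityMeasure μπ]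
    (P : Kernel 𝒳 𝒳) [IsMarkovKernel P]
    (π ν : Measure 𝒳) [IsProbabilityMeasure π] [IsProbabilityMeasure ν]
    (hinv : Kernel.Invariant P π)
    (J : Set 𝒳) (hJmeas : MeasurableSet J) (hJpos : 0 < π J)
    (β : ℝ) (hβpos : 0 < β) (hβle : β ≤ 1)
    (hsmall : ∀ x, ∀ A : Set 𝒳, MeasurableSet A →
      ENNReal.ofReal β * J.indicator (fun _ => (1 : ℝ≥0∞)) x * ν A ≤ P x A)
    (X : ℕ → Ω → 𝒳) (G : ℕ → Ω → Bool)
    (hchain : IsSplitChain μν P J β ν X G)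
    (hX0 : μν.map (X 0) = ν)
    (X' : ℕ → Ω' → 𝒳) (G' : ℕ → Ω' → Bool)
    (hchain' : IsSplitChain μπ P J β ν X' G')
    (hX0' : μπ.map (X' 0) = π)
    (g : 𝒳 → ℝ) (hgmeas : Measurable g) (hgpos : ∀ x, 0 ≤ g x) :
    (∫⁻ ω, (regTime G 1 ω : ℝ≥0∞) ∂μν) = (ENNReal.ofReal β * π J)⁻¹ ∧
    ∫⁻ ω, (ENNReal.ofReal (blockSum1 g X G ω)) ^ 2 ∂μν =
      (∫⁻ ω, (regTime G 1 ω : ℝ≥0∞) ∂μν) *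
        ((∫⁻ ω', (ENNReal.ofReal (g (X' 0 ω'))) ^ 2 ∂μπ) +
          2 * ∑' k : ℕ, ∫⁻ ω',
            ENNReal.ofReal (g (X' 0 ω')) * ENNReal.ofReal (g (X' (k + 1) ω')) *
              (if ∀ i ≤ k, G' i ω' = false then 1 else 0) ∂μπ) :=
  block_second_moment_identity_general μν μπ P π ν hinv J hJmeas β hsmall X G hchain hX0 X' G'
    hchain' hX0' g hgmeas hgpos
end

section
/- Suppose π is an invariant probability measure for P (πP = π), J ⊆ 𝒳 is measurable, V : 𝒳 → [1,∞) is measurable, λ ∈ (0,1), K < ∞. (a) If the one-step drift condition PV(x) ≤ λV(x) for x ∉ J and PV(x) ≤ K for x ∈ J holds and π(V) < ∞, then π(V) ≤ π(J)·(K − λ)/(1 − λ) ≤ (K − λ)/(1 − λ). (b) If the squared drift condition PV²(x) ≤ λ²V²(x) for x ∉ J and PV²(x) ≤ K² for x ∈ J holds and π(V²) < ∞, then π(V²) ≤ π(J)·(K² − λ²)/(1 − λ²) ≤ (K² − λ²)/(1 − λ²). -/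
/-!
Integrating the drift inequality against `π` and using `πP = π` gives
`π(V) ≤ K π(J) + λ π(V; Jᶜ)`. Since `V ≥ 1`, `π(V; J) ≥ π(J)`, so
`π(V) + λ π(J) ≤ K π(J) + λ π(V)`; when `π(V) < ∞` this rearranges to
`(1 - λ) π(V) ≤ (K - λ) π(J)`. Part (b) is part (a) applied to `V²` and `λ²`.
-/

open MeasureTheory ProbabilityTheory Set ENNReal

theorem ENNReal.le_mul_ofReal_div_of_add_mul_le {I p : ℝ≥0∞} {a b : ℝ} (hI : I ≠ ∞)
    (hp : p ≠ ∞) (ha0 : 0 ≤ a) (ha1 : a < 1)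
    (h : I + ENNReal.ofReal a * p ≤ ENNReal.ofReal b * p + ENNReal.ofReal a * I) :
    I ≤ p * ENNReal.ofReal ((b - a) / (1 - a)) := by
  rcases eq_zero_or_pos I with rfl | hI0
  · exact zero_le
  have hR := (ENNReal.toReal_le_toReal (by finiteness) (by finiteness)).2 h
  simp only [toReal_add, toReal_mul, toReal_ofReal', ne_eq, hI, hp, not_false_eq_true,
    mul_ne_top, ofReal_ne_top, max_eq_left ha0] at hR
  have hi : 0 < I.toReal := toReal_pos hI0.ne' hI
  have hp0 : 0 ≤ p.toReal := toReal_nonneg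
  -- `(1 - a) i ≤ (max b 0 - a) p` with `i > 0` forces `b > a ≥ 0`.
  have hb : a < b := by
    by_contra! hba
    have : max b 0 ≤ a := max_le hba ha0
    nlinarith
  rw [← ofReal_toReal hI, ← ofReal_toReal hp, ← ofReal_mul hp0]
  refine ofReal_le_ofReal ?_
  rw [max_eq_left (by linarith)] at hR
  rw [mul_div_assoc', le_div_iff₀ (by linarith)]
  nlinarith

namespace ProbabilityTheory.Kernel.Invariant

variable {𝒳 : Type*} [MeasurableSpace 𝒳] {P : Kernel 𝒳 𝒳} {π : Measure 𝒳}

theorem lintegral_lintegral (hinv : Invariant P π) {f : 𝒳 → ℝ≥0∞} (hf : Measurable f) :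
    ∫⁻ x, ∫⁻ y, f y ∂(P x) ∂π = ∫⁻ x, f x ∂π := by
  conv_rhs => rw [← hinv.def]
  exact (Measure.lintegral_bind P.measurable.aemeasurable hf.aemeasurable).symm

theorem lintegral_add_mul_le_of_drift (hinv : Invariant P π) {J : Set 𝒳}
    (hJ : MeasurableSet J) {f : 𝒳 → ℝ≥0∞} (hf : Measurable f) (hf1 : ∀ x ∈ J, 1 ≤ f x)
    {c β : ℝ≥0∞} (hoff : ∀ x ∉ J, ∫⁻ y, f y ∂(P x) ≤ c * f x)
    (hon : ∀ x ∈ J, ∫⁻ y, f y ∂(P x) ≤ β) :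
    ∫⁻ x, f x ∂π + c * π J ≤ β * π J + c * ∫⁻ x, f x ∂π := by
  have hJ_le : π J ≤ ∫⁻ x in J, f x ∂π := by
    simpa using setLIntegral_mono hf hf1
  have hdrift : ∫⁻ x, f x ∂π ≤ β * π J + c * ∫⁻ x in Jᶜ, f x ∂π := by
    calc ∫⁻ x, f x ∂π
        = ∫⁻ x in J, ∫⁻ y, f y ∂(P x) ∂π + ∫⁻ x in Jᶜ, ∫⁻ y, f y ∂(P x) ∂π := by
          rw [lintegral_add_compl _ hJ, hinv.lintegral_lintegral hf]
      _ ≤ ∫⁻ _ in J, β ∂π + ∫⁻ x in Jᶜ, c * f x ∂π :=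
          add_le_add (setLIntegral_mono measurable_const hon)
            (setLIntegral_mono (hf.const_mul c) hoff)
      _ = β * π J + c * ∫⁻ x in Jᶜ, f x ∂π := by
          rw [MeasureTheory.setLIntegral_const, lintegral_const_mul _ hf]
  calc ∫⁻ x, f x ∂π + c * π J
      ≤ β * π J + c * ∫⁻ x in Jᶜ, f x ∂π + c * ∫⁻ x in J, f x ∂π := by gcongr
    _ = β * π J + c * ∫⁻ x, f x ∂π := by
      rw [add_assoc, ← mul_add, add_comm (∫⁻ x in Jᶜ, f x ∂π), lintegral_add_compl _ hJ]

theorem lintegral_ofReal_le_of_drift [IsFiniteMeasure π] (hinv : Invariant P π) {J : Set 𝒳}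
    (hJ : MeasurableSet J) {W : 𝒳 → ℝ} (hW : Measurable W) (hW1 : ∀ x ∈ J, 1 ≤ W x)
    {a b : ℝ} (ha0 : 0 ≤ a) (ha1 : a < 1)
    (hoff : ∀ x ∉ J, ∫⁻ y, ENNReal.ofReal (W y) ∂(P x) ≤ ENNReal.ofReal (a * W x))
    (hon : ∀ x ∈ J, ∫⁻ y, ENNReal.ofReal (W y) ∂(P x) ≤ ENNReal.ofReal b)
    (hfin : ∫⁻ x, ENNReal.ofReal (W x) ∂π ≠ ∞) :
    ∫⁻ x, ENNReal.ofReal (W x) ∂π ≤ π J * ENNReal.ofReal ((b - a) / (1 - a)) := by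
  refine le_mul_ofReal_div_of_add_mul_le hfin (measure_ne_top π J) ha0 ha1
    (hinv.lintegral_add_mul_le_of_drift hJ hW.ennreal_ofReal
      (fun x hx => one_le_ofReal.2 (hW1 x hx)) (fun x hx => ?_) hon)
  rw [← ofReal_mul ha0]
  exact hoff x hx

end ProbabilityTheory.Kernel.Invariant

theorem stationary_moment_bounds_from_drift_general
    {𝒳 : Type*} [MeasurableSpace 𝒳]
    (P : Kernel 𝒳 𝒳)
    (π : Measure 𝒳) [IsProbabilityMeasure π]
    (hinv : Kernel.Invariant P π)
    (J : Set 𝒳) (hJmeas : MeasurableSet J)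
    (V : 𝒳 → ℝ) (hVmeas : Measurable V) (hV1 : ∀ x, 1 ≤ V x)
    (l K : ℝ) (hl0 : 0 < l) (hl1 : l < 1) :
    ((∀ x ∉ J, ∫⁻ y, ENNReal.ofReal (V y) ∂(P x) ≤ ENNReal.ofReal (l * V x)) →
      (∀ x ∈ J, ∫⁻ y, ENNReal.ofReal (V y) ∂(P x) ≤ ENNReal.ofReal K) →
      (∫⁻ x, ENNReal.ofReal (V x) ∂π ≠ ∞) →
      (∫⁻ x, ENNReal.ofReal (V x) ∂π ≤ π J * ENNReal.ofReal ((K - l) / (1 - l)) ∧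
        π J * ENNReal.ofReal ((K - l) / (1 - l)) ≤ ENNReal.ofReal ((K - l) / (1 - l)))) ∧
    ((∀ x ∉ J,
        ∫⁻ y, ENNReal.ofReal ((V y) ^ 2) ∂(P x) ≤ ENNReal.ofReal (l ^ 2 * (V x) ^ 2)) →
      (∀ x ∈ J, ∫⁻ y, ENNReal.ofReal ((V y) ^ 2) ∂(P x) ≤ ENNReal.ofReal (K ^ 2)) →
      (∫⁻ x, ENNReal.ofReal ((V x) ^ 2) ∂π ≠ ∞) →
      (∫⁻ x, ENNReal.ofReal ((V x) ^ 2) ∂π ≤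
          π J * ENNReal.ofReal ((K ^ 2 - l ^ 2) / (1 - l ^ 2)) ∧
        π J * ENNReal.ofReal ((K ^ 2 - l ^ 2) / (1 - l ^ 2)) ≤
          ENNReal.ofReal ((K ^ 2 - l ^ 2) / (1 - l ^ 2)))) := by
  have hπJ : π J ≤ 1 := prob_le_one
  refine ⟨fun hoff hon hfin => ⟨?_, mul_le_of_le_one_left zero_le hπJ⟩,
    fun hoff hon hfin => ⟨?_, mul_le_of_le_one_left zero_le hπJ⟩⟩
  · exact hinv.lintegral_ofReal_le_of_drift hJmeas hVmeas (fun x _ => hV1 x) hl0.le hl1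
      hoff hon hfin
  · exact hinv.lintegral_ofReal_le_of_drift hJmeas (hVmeas.pow_const 2)
      (fun x _ => one_le_pow₀ (hV1 x)) (sq_nonneg l) (pow_lt_one₀ hl0.le hl1 two_ne_zero)
      hoff hon hfin

/-- **Stationary moment bounds from drift**: let `π` be invariant for `P`, `J` measurable,
`V ≥ 1` measurable, `λ ∈ (0,1)`, `K < ∞`.
(a) If `PV ≤ λV` off `J`, `PV ≤ K` on `J`, and `π(V) < ∞`, then
`π(V) ≤ π(J)(K − λ)/(1 − λ) ≤ (K − λ)/(1 − λ)`.
(b) If `PV² ≤ λ²V²` off `J`, `PV² ≤ K²` on `J`, and `π(V²) < ∞`, then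
`π(V²) ≤ π(J)(K² − λ²)/(1 − λ²) ≤ (K² − λ²)/(1 − λ²)`. -/
theorem stationary_moment_bounds_from_drift
    {𝒳 : Type*} [MeasurableSpace 𝒳]
    (P : Kernel 𝒳 𝒳) [IsMarkovKernel P]
    (π : Measure 𝒳) [IsProbabilityMeasure π]
    (hinv : Kernel.Invariant P π)
    (J : Set 𝒳) (hJmeas : MeasurableSet J)
    (V : 𝒳 → ℝ) (hVmeas : Measurable V) (hV1 : ∀ x, 1 ≤ V x)
    (l K : ℝ) (hl0 : 0 < l) (hl1 : l < 1) :
    ((∀ x ∉ J, ∫⁻ y, ENNReal.ofReal (V y) ∂(P x) ≤ ENNReal.ofReal (l * V x)) →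
      (∀ x ∈ J, ∫⁻ y, ENNReal.ofReal (V y) ∂(P x) ≤ ENNReal.ofReal K) →
      (∫⁻ x, ENNReal.ofReal (V x) ∂π ≠ ∞) →
      (∫⁻ x, ENNReal.ofReal (V x) ∂π ≤ π J * ENNReal.ofReal ((K - l) / (1 - l)) ∧
        π J * ENNReal.ofReal ((K - l) / (1 - l)) ≤ ENNReal.ofReal ((K - l) / (1 - l)))) ∧
    ((∀ x ∉ J,
        ∫⁻ y, ENNReal.ofReal ((V y) ^ 2) ∂(P x) ≤ ENNReal.ofReal (l ^ 2 * (V x) ^ 2)) →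
      (∀ x ∈ J, ∫⁻ y, ENNReal.ofReal ((V y) ^ 2) ∂(P x) ≤ ENNReal.ofReal (K ^ 2)) →
      (∫⁻ x, ENNReal.ofReal ((V x) ^ 2) ∂π ≠ ∞) →
      (∫⁻ x, ENNReal.ofReal ((V x) ^ 2) ∂π ≤
          π J * ENNReal.ofReal ((K ^ 2 - l ^ 2) / (1 - l ^ 2)) ∧
        π J * ENNReal.ofReal ((K ^ 2 - l ^ 2) / (1 - l ^ 2)) ≤
          ENNReal.ofReal ((K ^ 2 - l ^ 2) / (1 - l ^ 2)))) :=
  stationary_moment_bounds_from_drift_general P π hinv J hJmeas V hVmeas hV1 l K hl0 hl1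
end

section
/- Let (X_n) be a Markov chain on 𝒳 with transition kernel P satisfying the one-step drift condition PV(x) ≤ λ·V(x) for x ∉ J and PV(x) ≤ K for x ∈ J, where V : 𝒳 → [1,∞) is measurable, λ ∈ (0,1), K < ∞, and J ⊆ 𝒳 is measurable. Let S := min{n ≥ 0 : X_n ∈ J}. Then for every x ∈ 𝒳, H(x) := E_x[ Σ_{n=0}^{S} V(X_n) ] ≤ (V(x) − λ)/(1 − λ); in particular S < ∞ P_x-almost surely and in fact the stronger inequality E_x[V(X_S)]·λ/(1 − λ) + H(x) ≤ V(x)/(1 − λ) holds. -/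
/-!
Write `a n = E[V(X_n); S ≥ n]` and `b n = E[V(X_n); S = n]`. On `{S ≥ n + 1}` the chain is
outside `J` at time `n`, so the Markov property and the drift `PV ≤ λV` give
`a (n+1) ≤ λ (a n - b n)`, while `a 0 = V x`. Summing over `n` yields
`(1 - λ) ∑ a + λ ∑ b ≤ V x`. Hence `∑ a < ∞`, so `P(S ≥ n) ≤ a n → 0` and `S < ∞` a.s., which
in turn gives `∑ b ≥ P(S < ∞) = 1`; both bounds follow by rearranging.
-/

open MeasureTheory ProbabilityTheory Set ENNReal

/-- `(X n)` is a Markov chain with transition kernel `P`: conditionally on the past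
`σ(X 0, …, X n)`, the next state `X (n+1)` is distributed according to `P (X n, ·)`. -/
structure IsMarkovChainWith {Ω 𝒳 : Type*} [MeasurableSpace Ω] [MeasurableSpace 𝒳]
    (μ : Measure Ω) (P : Kernel 𝒳 𝒳) (X : ℕ → Ω → 𝒳) : Prop where
  measX : ∀ n, Measurable (X n)
  markov : ∀ n, ∀ A : Set 𝒳, MeasurableSet A → ∀ B : Set Ω,
    MeasurableSet[⨆ i ∈ Set.Iic n, MeasurableSpace.comap (X i) inferInstance] B →
    μ (B ∩ (X (n + 1)) ⁻¹' A) = ∫⁻ ω in B, P (X n ω) A ∂μ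

namespace ENNReal

theorem tsum_ne_top_of_drift {a b : ℕ → ℝ≥0∞} {r : ℝ≥0∞} (hr : r < 1) (ha0 : a 0 ≠ ∞)
    (h : ∀ n, a (n + 1) + r * b n ≤ r * a n) : ∑' n, a n ≠ ∞ := by
  have hdecay : ∀ n, a n ≤ r ^ n * a 0 := by
    intro n
    induction n with
    | zero => simp
    | succ n ih =>
      calc a (n + 1) ≤ r * a n := le_self_add.trans (h n)
        _ ≤ r * (r ^ n * a 0) := by gcongr
        _ = r ^ (n + 1) * a 0 := by ring
  refine ne_top_of_le_ne_top ?_ (ENNReal.tsum_le_tsum hdecay)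
  rw [ENNReal.tsum_mul_right, ENNReal.tsum_geometric]
  exact mul_ne_top (inv_ne_top.2 (tsub_pos_of_lt hr).ne') ha0

theorem tsum_le_of_drift {a b : ℕ → ℝ≥0∞} {r : ℝ≥0∞} (hr : r < 1) (ha0 : a 0 ≠ ∞)
    (h : ∀ n, a (n + 1) + r * b n ≤ r * a n) :
    (1 - r) * ∑' n, a n + r * ∑' n, b n ≤ a 0 := by
  have htelescope : ∑' n, a n + r * ∑' n, b n ≤ r * ∑' n, a n + a 0 :=
    calc ∑' n, a n + r * ∑' n, b n = a 0 + ∑' n, (a (n + 1) + r * b n) := by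
          rw [tsum_eq_zero_add' ENNReal.summable, ENNReal.tsum_add, ENNReal.tsum_mul_left,
            add_assoc]
      _ ≤ a 0 + ∑' n, r * a n := by gcongr with n; exact h n
      _ = r * ∑' n, a n + a 0 := by rw [ENNReal.tsum_mul_left, add_comm]
  rw [← ENNReal.add_le_add_iff_left (mul_ne_top hr.ne_top (tsum_ne_top_of_drift hr ha0 h)),
    ← add_assoc, ← add_mul, add_tsub_cancel_of_le hr.le, one_mul]
  exact htelescope

theorem le_ofReal_div_iff {y : ℝ≥0∞} {w c : ℝ} (hc : 0 < c) :
    y ≤ ENNReal.ofReal (w / c) ↔ y * ENNReal.ofReal c ≤ ENNReal.ofReal w := by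
  rw [ofReal_div_of_pos hc,
    ENNReal.le_div_iff_mul_le (Or.inl (ofReal_pos.2 hc).ne') (Or.inl ofReal_ne_top)]

theorem le_ofReal_sub_div_of_mul_add_le {A B : ℝ≥0∞} {v l : ℝ} (hl0 : 0 ≤ l) (hl1 : l < 1)
    (hB : 1 ≤ B) (h : ENNReal.ofReal (1 - l) * A + ENNReal.ofReal l * B ≤ ENNReal.ofReal v) :
    A ≤ ENNReal.ofReal ((v - l) / (1 - l)) := by
  rw [le_ofReal_div_iff (sub_pos.2 hl1), ofReal_sub v hl0, mul_comm]
  refine ENNReal.le_sub_of_add_le_right ofReal_ne_top (le_trans ?_ h)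
  gcongr
  exact le_mul_of_one_le_right' hB

theorem mul_add_le_ofReal_div_of_mul_add_le {A B : ℝ≥0∞} {v l : ℝ} (hl0 : 0 ≤ l) (hl1 : l < 1)
    (h : ENNReal.ofReal (1 - l) * A + ENNReal.ofReal l * B ≤ ENNReal.ofReal v) :
    B * ENNReal.ofReal (l / (1 - l)) + A ≤ ENNReal.ofReal (v / (1 - l)) := by
  have h1l : 0 < 1 - l := sub_pos.2 hl1
  rw [le_ofReal_div_iff h1l, add_mul, mul_assoc, ← ofReal_mul (div_nonneg hl0 h1l.le),
    div_mul_cancel₀ _ h1l.ne']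
  calc B * ENNReal.ofReal l + A * ENNReal.ofReal (1 - l)
      = ENNReal.ofReal (1 - l) * A + ENNReal.ofReal l * B := by ring
    _ ≤ ENNReal.ofReal v := h

end ENNReal

theorem lintegral_mul_indicator_one {Ω : Type*} [MeasurableSpace Ω] {μ : Measure Ω}
    {s : Set Ω} (hs : MeasurableSet s) (f : Ω → ℝ≥0∞) :
    ∫⁻ ω, f ω * s.indicator (fun _ => 1) ω ∂μ = ∫⁻ ω in s, f ω ∂μ := by
  simp_rw [← indicator_mul_right, mul_one]
  exact lintegral_indicator hs f

theorem measure_le_setLIntegral_of_one_le {Ω : Type*} [MeasurableSpace Ω] {μ : Measure Ω}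
    {f : Ω → ℝ≥0∞} (hf : ∀ ω, 1 ≤ f ω) (s : Set Ω) : μ s ≤ ∫⁻ ω in s, f ω ∂μ := by
  rw [← setLIntegral_one]
  exact lintegral_mono hf

section HittingTime

variable {Ω 𝒳 : Type*}

def notHitBefore (X : ℕ → Ω → 𝒳) (J : Set 𝒳) (n : ℕ) : Set Ω := {ω | ∀ m < n, X m ω ∉ J}

def firstHitAt (X : ℕ → Ω → 𝒳) (J : Set 𝒳) (n : ℕ) : Set Ω := X n ⁻¹' J ∩ notHitBefore X J n

theorem notHitBefore_eq_union (X : ℕ → Ω → 𝒳) (J : Set 𝒳) (n : ℕ) :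
    notHitBefore X J n = notHitBefore X J (n + 1) ∪ firstHitAt X J n := by
  ext ω
  simp only [notHitBefore, firstHitAt, mem_union, mem_inter_iff, mem_preimage, mem_ofPred_eq,
    Nat.lt_succ_iff_lt_or_eq]
  by_cases hn : X n ω ∈ J <;> aesop

theorem disjoint_notHitBefore_succ_firstHitAt (X : ℕ → Ω → 𝒳) (J : Set 𝒳) (n : ℕ) :
    Disjoint (notHitBefore X J (n + 1)) (firstHitAt X J n) :=
  disjoint_left.2 fun _ hC hD => hC n n.lt_succ_self hD.1

@[simp]
theorem notHitBefore_zero (X : ℕ → Ω → 𝒳) (J : Set 𝒳) : notHitBefore X J 0 = univ := by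
  simp [notHitBefore]

theorem measurableSet_notHitBefore_succ [MeasurableSpace 𝒳] {X : ℕ → Ω → 𝒳} {J : Set 𝒳}
    (hJ : MeasurableSet J) (n : ℕ) :
    MeasurableSet[⨆ i ∈ Iic n, MeasurableSpace.comap (X i) inferInstance]
      (notHitBefore X J (n + 1)) := by
  have h : notHitBefore X J (n + 1) = ⋂ i ∈ Iic n, X i ⁻¹' Jᶜ := by
    ext ω; simp [notHitBefore]
  rw [h]
  refine MeasurableSet.biInter (to_countable _) fun i hi => ?_
  exact le_biSup (fun i => MeasurableSpace.comap (X i) inferInstance) hi _ ⟨Jᶜ, hJ.compl, rfl⟩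

theorem measurableSet_notHitBefore [MeasurableSpace Ω] [MeasurableSpace 𝒳] {X : ℕ → Ω → 𝒳}
    {J : Set 𝒳} (hX : ∀ n, Measurable (X n)) (hJ : MeasurableSet J) (n : ℕ) :
    MeasurableSet (notHitBefore X J n) := by
  cases n with
  | zero => simp
  | succ n =>
    exact iSup₂_le (fun i _ => (hX i).comap_le) _ (measurableSet_notHitBefore_succ hJ n)

theorem measurableSet_firstHitAt [MeasurableSpace Ω] [MeasurableSpace 𝒳] {X : ℕ → Ω → 𝒳}
    {J : Set 𝒳} (hX : ∀ n, Measurable (X n)) (hJ : MeasurableSet J) (n : ℕ) :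
    MeasurableSet (firstHitAt X J n) :=
  (hX n hJ).inter (measurableSet_notHitBefore hX hJ n)

theorem ae_exists_hit_of_tsum_ne_top [MeasurableSpace Ω] {μ : Measure Ω} {X : ℕ → Ω → 𝒳}
    {J : Set 𝒳} (h : ∑' n, μ (notHitBefore X J n) ≠ ∞) : ∀ᵐ ω ∂μ, ∃ n, X n ω ∈ J := by
  rw [ae_iff]
  exact le_antisymm (ge_of_tendsto' (ENNReal.tendsto_atTop_zero_of_tsum_ne_top h)
    fun n => measure_mono fun ω hω m _ hm => hω ⟨m, hm⟩) zero_le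

theorem one_le_tsum_measure_firstHitAt [MeasurableSpace Ω] {μ : Measure Ω}
    [IsProbabilityMeasure μ] {X : ℕ → Ω → 𝒳} {J : Set 𝒳} (h : ∀ᵐ ω ∂μ, ∃ n, X n ω ∈ J) :
    1 ≤ ∑' n, μ (firstHitAt X J n) := by
  classical
  have hcover : univ ≤ᵐ[μ] ⋃ n, firstHitAt X J n := by
    filter_upwards [h] with ω hω _
    exact mem_iUnion.2 ⟨Nat.find hω, Nat.find_spec hω, fun m hm => Nat.find_min hω hm⟩
  calc 1 = μ univ := measure_univ.symm
    _ ≤ μ (⋃ n, firstHitAt X J n) := measure_mono_ae hcover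
    _ ≤ ∑' n, μ (firstHitAt X J n) := measure_iUnion_le _

end HittingTime

namespace IsMarkovChainWith

variable {Ω 𝒳 : Type*} [MeasurableSpace Ω] [MeasurableSpace 𝒳] {μ : Measure Ω}
  {P : Kernel 𝒳 𝒳} {X : ℕ → Ω → 𝒳}

theorem map_restrict_succ (hX : IsMarkovChainWith μ P X) {n : ℕ} {B : Set Ω}
    (hB : MeasurableSet[⨆ i ∈ Iic n, MeasurableSpace.comap (X i) inferInstance] B) :
    (μ.restrict B).map (X (n + 1)) = P ∘ₘ (μ.restrict B).map (X n) := by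
  ext A hA
  rw [Measure.map_apply (hX.measX _) hA, Measure.restrict_apply (hX.measX _ hA), inter_comm,
    hX.markov n A hA B hB, Measure.bind_apply hA P.aemeasurable,
    lintegral_map (P.measurable_coe hA) (hX.measX n)]

theorem setLIntegral_comp_succ (hX : IsMarkovChainWith μ P X) {n : ℕ} {B : Set Ω}
    (hB : MeasurableSet[⨆ i ∈ Iic n, MeasurableSpace.comap (X i) inferInstance] B)
    {f : 𝒳 → ℝ≥0∞} (hf : Measurable f) :
    ∫⁻ ω in B, f (X (n + 1) ω) ∂μ = ∫⁻ ω in B, ∫⁻ y, f y ∂P (X n ω) ∂μ := by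
  rw [← lintegral_map hf (hX.measX _), hX.map_restrict_succ hB,
    Measure.lintegral_bind P.aemeasurable hf.aemeasurable,
    lintegral_map hf.lintegral_kernel (hX.measX n)]

theorem lintegral_notHitBefore_succ_add_le (hX : IsMarkovChainWith μ P X) {J : Set 𝒳}
    (hJ : MeasurableSet J) {V : 𝒳 → ℝ} (hV : Measurable V) {l : ℝ} (hl : 0 ≤ l)
    (hdrift : ∀ x ∉ J, ∫⁻ y, ENNReal.ofReal (V y) ∂P x ≤ ENNReal.ofReal (l * V x)) (n : ℕ) :
    ∫⁻ ω in notHitBefore X J (n + 1), ENNReal.ofReal (V (X (n + 1) ω)) ∂μ +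
        ENNReal.ofReal l * ∫⁻ ω in firstHitAt X J n, ENNReal.ofReal (V (X n ω)) ∂μ ≤
      ENNReal.ofReal l * ∫⁻ ω in notHitBefore X J n, ENNReal.ofReal (V (X n ω)) ∂μ := by
  have hstep : ∫⁻ ω in notHitBefore X J (n + 1), ENNReal.ofReal (V (X (n + 1) ω)) ∂μ ≤
      ENNReal.ofReal l * ∫⁻ ω in notHitBefore X J (n + 1), ENNReal.ofReal (V (X n ω)) ∂μ := by
    rw [hX.setLIntegral_comp_succ (measurableSet_notHitBefore_succ hJ n) hV.ennreal_ofReal,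
      ← lintegral_const_mul' _ _ ofReal_ne_top]
    refine setLIntegral_mono' (measurableSet_notHitBefore hX.measX hJ _) fun ω hω => ?_
    rw [← ENNReal.ofReal_mul hl]
    exact hdrift _ (hω n n.lt_succ_self)
  rw [notHitBefore_eq_union X J n, lintegral_union (measurableSet_firstHitAt hX.measX hJ n)
    (disjoint_notHitBefore_succ_firstHitAt X J n), mul_add]
  gcongr

end IsMarkovChainWith

theorem drift_hitting_time_bound_general
    {Ω 𝒳 : Type*} [MeasurableSpace Ω] [MeasurableSpace 𝒳]
    (μ : Measure Ω) [IsProbabilityMeasure μ]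
    (P : Kernel 𝒳 𝒳)
    (J : Set 𝒳) (hJmeas : MeasurableSet J)
    (V : 𝒳 → ℝ) (hVmeas : Measurable V) (hV1 : ∀ x, 1 ≤ V x)
    (l : ℝ) (hl0 : 0 < l) (hl1 : l < 1)
    (hdrift_off : ∀ x ∉ J, ∫⁻ y, ENNReal.ofReal (V y) ∂(P x) ≤ ENNReal.ofReal (l * V x))
    (x : 𝒳) (X : ℕ → Ω → 𝒳) (hchain : IsMarkovChainWith μ P X)
    (hX0 : μ.map (X 0) = Measure.dirac x) :
    (∑' n : ℕ, ∫⁻ ω, ENNReal.ofReal (V (X n ω)) *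
        ({ω' : Ω | ∀ m < n, X m ω' ∉ J}.indicator (fun _ => (1 : ℝ≥0∞)) ω) ∂μ) ≤
      ENNReal.ofReal ((V x - l) / (1 - l)) ∧
    (∀ᵐ ω ∂μ, ∃ n : ℕ, X n ω ∈ J) ∧
    (∑' n : ℕ, ∫⁻ ω, ENNReal.ofReal (V (X n ω)) *
          ({ω' : Ω | X n ω' ∈ J ∧ ∀ m < n, X m ω' ∉ J}.indicator (fun _ => (1 : ℝ≥0∞)) ω) ∂μ) *
        ENNReal.ofReal (l / (1 - l)) +
      (∑' n : ℕ, ∫⁻ ω, ENNReal.ofReal (V (X n ω)) *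
          ({ω' : Ω | ∀ m < n, X m ω' ∉ J}.indicator (fun _ => (1 : ℝ≥0∞)) ω) ∂μ) ≤
      ENNReal.ofReal (V x / (1 - l)) := by
  set a : ℕ → ℝ≥0∞ := fun n => ∫⁻ ω in notHitBefore X J n, ENNReal.ofReal (V (X n ω)) ∂μ
  set b : ℕ → ℝ≥0∞ := fun n => ∫⁻ ω in firstHitAt X J n, ENNReal.ofReal (V (X n ω)) ∂μ
  have hA : ∑' n : ℕ, ∫⁻ ω, ENNReal.ofReal (V (X n ω)) *
      ({ω' : Ω | ∀ m < n, X m ω' ∉ J}.indicator (fun _ => (1 : ℝ≥0∞)) ω) ∂μ = ∑' n, a n :=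
    tsum_congr fun n => lintegral_mul_indicator_one
      (measurableSet_notHitBefore hchain.measX hJmeas n) _
  have hB : ∑' n : ℕ, ∫⁻ ω, ENNReal.ofReal (V (X n ω)) *
      ({ω' : Ω | X n ω' ∈ J ∧ ∀ m < n, X m ω' ∉ J}.indicator (fun _ => (1 : ℝ≥0∞)) ω) ∂μ =
      ∑' n, b n :=
    tsum_congr fun n => lintegral_mul_indicator_one
      (measurableSet_firstHitAt hchain.measX hJmeas n) _
  have hstep := hchain.lintegral_notHitBefore_succ_add_le hJmeas hVmeas hl0.le hdrift_off
  have hl1' : ENNReal.ofReal l < 1 := ofReal_lt_one.2 hl1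
  have ha0 : a 0 = ENNReal.ofReal (V x) := by
    simp only [a, notHitBefore_zero, Measure.restrict_univ]
    rw [← lintegral_map hVmeas.ennreal_ofReal (hchain.measX 0), hX0,
      lintegral_dirac' x hVmeas.ennreal_ofReal]
  have ha0_ne_top : a 0 ≠ ∞ := ha0 ▸ ofReal_ne_top
  have hsum : ENNReal.ofReal (1 - l) * ∑' n, a n + ENNReal.ofReal l * ∑' n, b n ≤
      ENNReal.ofReal (V x) := by
    rw [ofReal_sub _ hl0.le, ofReal_one, ← ha0]
    exact ENNReal.tsum_le_of_drift hl1' ha0_ne_top hstep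
  have hae : ∀ᵐ ω ∂μ, ∃ n, X n ω ∈ J :=
    ae_exists_hit_of_tsum_ne_top <|
      ne_top_of_le_ne_top (ENNReal.tsum_ne_top_of_drift hl1' ha0_ne_top hstep) <|
        ENNReal.tsum_le_tsum fun n =>
          measure_le_setLIntegral_of_one_le (fun ω => one_le_ofReal.2 (hV1 _)) _
  have hb1 : 1 ≤ ∑' n, b n :=
    (one_le_tsum_measure_firstHitAt hae).trans <| ENNReal.tsum_le_tsum fun n =>
      measure_le_setLIntegral_of_one_le (fun ω => one_le_ofReal.2 (hV1 _)) _
  rw [hA, hB]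
  exact ⟨le_ofReal_sub_div_of_mul_add_le hl0.le hl1 hb1 hsum, hae,
    mul_add_le_ofReal_div_of_mul_add_le hl0.le hl1 hsum⟩

/-- **Hitting-time bound from the drift condition** (inequalities (A.1)–(A.2) of the paper):
under the one-step drift condition `PV ≤ λV` off `J`, `PV ≤ K` on `J` (with `V ≥ 1`,
`λ ∈ (0,1)`), for the chain started at `x`, with `S = min{n ≥ 0 : X n ∈ J}` the first hitting
time of `J`, one has
`H(x) = E_x[∑_{n=0}^{S} V(X_n)] ≤ (V(x) − λ)/(1 − λ)`;
in particular `S < ∞` a.s., and in fact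
`E_x[V(X_S)]·λ/(1 − λ) + H(x) ≤ V(x)/(1 − λ)`.
Here `E_x[∑_{n=0}^{S} V(X_n)]` is written as `∑_{n=0}^∞ E_x[V(X_n)·1{n ≤ S}]` (noting that
`n ≤ S` iff `X m ∉ J` for all `m < n`, and that for `S = ∞` the full sum appears), and
`E_x[V(X_S)]` as `∑_{n=0}^∞ E_x[V(X_n)·1{S = n}]`. -/
theorem drift_hitting_time_bound
    {Ω 𝒳 : Type*} [MeasurableSpace Ω] [MeasurableSpace 𝒳]
    (μ : Measure Ω) [IsProbabilityMeasure μ]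
    (P : Kernel 𝒳 𝒳) [IsMarkovKernel P]
    (J : Set 𝒳) (hJmeas : MeasurableSet J)
    (V : 𝒳 → ℝ) (hVmeas : Measurable V) (hV1 : ∀ x, 1 ≤ V x)
    (l K : ℝ) (hl0 : 0 < l) (hl1 : l < 1)
    (hdrift_off : ∀ x ∉ J, ∫⁻ y, ENNReal.ofReal (V y) ∂(P x) ≤ ENNReal.ofReal (l * V x))
    (hdrift_on : ∀ x ∈ J, ∫⁻ y, ENNReal.ofReal (V y) ∂(P x) ≤ ENNReal.ofReal K)
    (x : 𝒳) (X : ℕ → Ω → 𝒳) (hchain : IsMarkovChainWith μ P X)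
    (hX0 : μ.map (X 0) = Measure.dirac x) :
    (∑' n : ℕ, ∫⁻ ω, ENNReal.ofReal (V (X n ω)) *
        ({ω' : Ω | ∀ m < n, X m ω' ∉ J}.indicator (fun _ => (1 : ℝ≥0∞)) ω) ∂μ) ≤
      ENNReal.ofReal ((V x - l) / (1 - l)) ∧
    (∀ᵐ ω ∂μ, ∃ n : ℕ, X n ω ∈ J) ∧
    (∑' n : ℕ, ∫⁻ ω, ENNReal.ofReal (V (X n ω)) *
          ({ω' : Ω | X n ω' ∈ J ∧ ∀ m < n, X m ω' ∉ J}.indicator (fun _ => (1 : ℝ≥0∞)) ω) ∂μ) *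
        ENNReal.ofReal (l / (1 - l)) +
      (∑' n : ℕ, ∫⁻ ω, ENNReal.ofReal (V (X n ω)) *
          ({ω' : Ω | ∀ m < n, X m ω' ∉ J}.indicator (fun _ => (1 : ℝ≥0∞)) ω) ∂μ) ≤
      ENNReal.ofReal (V x / (1 - l)) :=
  drift_hitting_time_bound_general μ P J hJmeas V hVmeas hV1 l hl0 hl1 hdrift_off x X hchain hX0
end

section
/- Median trick: let θ̂^{(1)}, …, θ̂^{(l)} be independent identically distributed real-valued random variables, l odd, and let θ ∈ ℝ, ε > 0, δ ∈ (0, 1/2) be such that P(|θ̂^{(j)} − θ| ≥ ε) ≤ δ for each j. Then the median θ̂ := med(θ̂^{(1)}, …, θ̂^{(l)}) satisfies P( |θ̂ − θ| ≥ ε ) ≤ (1/2)·[4δ(1 − δ)]^{l/2}. -/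
/-!
If the median misses `θ` by `ε`, then so do at least `(l + 1) / 2 = t + 1` of the estimates
(`l = 2t + 1`). Each set `T` of indices is the exact set of deviating estimates with probability
`p ^ |T| * (1 - p) ^ (l - |T|) ≤ p ^ (t + 1) * (1 - p) ^ t`, where `p ≤ δ < 1/2` is the common
deviation probability, and exactly `2 ^ (l - 1) = 4 ^ t` sets have `|T| ≥ t + 1`. A union bound
gives `4 ^ t * p ^ (t + 1) * (1 - p) ^ t`, which is at most `½ (4δ(1 - δ)) ^ (l / 2)` because
`p (1 - p) ≤ δ (1 - δ)` and `p ≤ √(δ (1 - δ))`.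
-/

open MeasureTheory ProbabilityTheory Set ENNReal

/-- The sample median of `l` real numbers: for odd `l` this is the `(l+1)/2`-th order
statistic, i.e. the smallest value `x` such that at least `(l+1)/2` of the data points are
`≤ x`. -/
noncomputable def sampleMedian {l : ℕ} (v : Fin l → ℝ) : ℝ :=
  sInf {x : ℝ | (l + 1) / 2 ≤ (Finset.univ.filter fun j => v j ≤ x).card}

section SampleMedian

variable {l : ℕ} (v : Fin l → ℝ)

lemma sampleMedian_le_of_le_card (hl : 0 < l) {x : ℝ}
    (hx : (l + 1) / 2 ≤ (Finset.univ.filter fun j => v j ≤ x).card) :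
    sampleMedian v ≤ x := by
  obtain ⟨b, hb⟩ := (finite_range v).bddBelow
  refine csInf_le ⟨b, fun y hy => ?_⟩ hx
  obtain ⟨j, hj⟩ : (Finset.univ.filter fun j => v j ≤ y).Nonempty :=
    Finset.card_pos.1 (by change (l + 1) / 2 ≤ _ at hy; omega)
  exact (hb (mem_range_self j)).trans (Finset.mem_filter.1 hj).2

lemma le_sampleMedian_of_forall_le {y : ℝ}
    (hy : ∀ x, (l + 1) / 2 ≤ (Finset.univ.filter fun j => v j ≤ x).card → y ≤ x) :
    y ≤ sampleMedian v := by
  obtain ⟨b, hb⟩ := (finite_range v).bddAbove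
  refine le_csInf ⟨b, ?_⟩ hy
  change (l + 1) / 2 ≤ _
  rw [Finset.filter_true_of_mem fun j _ => hb (mem_range_self j)]
  simp only [Finset.card_univ, Fintype.card_fin]
  omega

lemma card_filter_lt_sampleMedian_lt (hl : 0 < l) :
    (Finset.univ.filter fun j => v j < sampleMedian v).card < (l + 1) / 2 := by
  by_contra! h
  have hne : (Finset.univ.filter fun j => v j < sampleMedian v).Nonempty :=
    Finset.card_pos.1 (by omega)
  obtain ⟨i, hi, hmax⟩ := Finset.exists_max_image _ v hne
  have : sampleMedian v ≤ v i := sampleMedian_le_of_le_card v hl <| h.trans <|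
    Finset.card_le_card fun j hj => Finset.mem_filter.2 ⟨Finset.mem_univ j, hmax j hj⟩
  exact (Finset.mem_filter.1 hi).2.not_ge this

lemma le_card_filter_le_sampleMedian :
    (l + 1) / 2 ≤ (Finset.univ.filter fun j => v j ≤ sampleMedian v).card := by
  by_contra! h
  have hne : (Finset.univ.filter fun j => sampleMedian v < v j).Nonempty := by
    by_contra hempty
    rw [Finset.not_nonempty_iff_eq_empty, Finset.filter_eq_empty_iff] at hempty
    rw [Finset.filter_true_of_mem fun j _ => not_lt.1 (hempty (Finset.mem_univ j))] at h
    simp only [Finset.card_univ, Fintype.card_fin] at h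
    omega
  obtain ⟨i, hi, hmin⟩ := Finset.exists_min_image _ v hne
  -- `v i` is the next data point above the median, so it bounds the defining set from below.
  have : v i ≤ sampleMedian v := le_sampleMedian_of_forall_le v fun x hx => by
    by_contra! hxi
    refine h.not_ge (hx.trans (Finset.card_le_card fun j hj => ?_))
    refine Finset.mem_filter.2 ⟨Finset.mem_univ j, not_lt.1 fun hjm => ?_⟩
    have := hmin j (Finset.mem_filter.2 ⟨Finset.mem_univ j, hjm⟩)
    linarith [(Finset.mem_filter.1 hj).2]
  exact (Finset.mem_filter.1 hi).2.not_ge this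

lemma le_card_filter_of_le_abs_sampleMedian_sub (hl : 0 < l) {θ ε : ℝ}
    (h : ε ≤ |sampleMedian v - θ|) :
    (l + 1) / 2 ≤ (Finset.univ.filter fun j => ε ≤ |v j - θ|).card := by
  rcases le_abs'.1 h with hbelow | habove
  · refine (le_card_filter_le_sampleMedian v).trans (Finset.card_le_card ?_)
    exact Finset.monotone_filter_right _ fun j _ hj => le_abs'.2 (Or.inl (by linarith))
  · have hsplit := Finset.card_filter_add_card_filter_not (s := Finset.univ)
      (p := fun j => v j < sampleMedian v)
    have hfar : (Finset.univ.filter fun j => ¬ v j < sampleMedian v).card ≤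
        (Finset.univ.filter fun j => ε ≤ |v j - θ|).card :=
      Finset.card_le_card <| Finset.monotone_filter_right _ fun j _ hj =>
        le_abs'.2 (Or.inr (by linarith [not_lt.1 hj]))
    have := card_filter_lt_sampleMedian_lt v hl
    simp only [Finset.card_univ, Fintype.card_fin] at hsplit
    omega

end SampleMedian

section DeviationCount

variable {Ω ι α : Type*} [MeasurableSpace Ω] [MeasurableSpace α] {μ : Measure Ω}
  [IsProbabilityMeasure μ] [Fintype ι] [DecidableEq ι] {X : ι → Ω → α} {D : Set α} {p : ℝ}

lemma measureReal_iInter_preimage_ite (hX : ∀ i, AEMeasurable (X i) μ) (hindep : iIndepFun X μ)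
    (hD : MeasurableSet D) (hp : ∀ i, μ.real (X i ⁻¹' D) = p) (T : Finset ι) :
    μ.real (⋂ i, X i ⁻¹' (if i ∈ T then D else Dᶜ)) = p ^ T.card * (1 - p) ^ Tᶜ.card := by
  have hprod := hindep.measure_inter_preimage_eq_mul Finset.univ
    (sets := fun i => if i ∈ T then D else Dᶜ) fun i _ => by split_ifs <;> simp [hD]
  simp only [Finset.mem_univ, iInter_true] at hprod
  rw [measureReal_def, hprod, ENNReal.toReal_prod]
  simp only [← measureReal_def, apply_ite, preimage_compl,
    probReal_compl_eq_one_sub₀ ((hX _).nullMeasurableSet_preimage hD), hp]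
  rw [Finset.prod_ite, Finset.prod_const, Finset.prod_const, Finset.filter_mem_eq_inter,
    Finset.univ_inter, Finset.filter_not, Finset.filter_mem_eq_inter, Finset.univ_inter,
    Finset.compl_eq_univ_sdiff]

lemma measureReal_le_card_filter_mem_le_sum [DecidablePred (· ∈ D)]
    (hX : ∀ i, AEMeasurable (X i) μ) (hindep : iIndepFun X μ) (hD : MeasurableSet D) (hp : ∀ i, μ.real (X i ⁻¹' D) = p) (k : ℕ) :
    μ.real {ω | k ≤ (Finset.univ.filter fun i => X i ω ∈ D).card} ≤
      ∑ T ∈ Finset.univ.filter (fun T : Finset ι => k ≤ T.card),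
        p ^ T.card * (1 - p) ^ Tᶜ.card := by
  have hcover : {ω | k ≤ (Finset.univ.filter fun i => X i ω ∈ D).card} ⊆
      ⋃ T ∈ Finset.univ.filter (fun T : Finset ι => k ≤ T.card),
        ⋂ i, X i ⁻¹' (if i ∈ T then D else Dᶜ) := by
    intro ω hω
    refine mem_iUnion₂.2 ⟨_, Finset.mem_filter.2 ⟨Finset.mem_univ _, hω⟩, mem_iInter.2 fun i => ?_⟩
    by_cases hi : X i ω ∈ D <;> simp [hi]
  calc _ ≤ _ := measureReal_mono hcover (measure_ne_top _ _)
    _ ≤ _ := measureReal_biUnion_finset_le _ _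
    _ = _ := Finset.sum_congr rfl fun T _ =>
      measureReal_iInter_preimage_ite hX hindep hD hp T

end DeviationCount

lemma card_filter_succ_le_card_eq_four_pow {ι : Type*} [Fintype ι] [DecidableEq ι] {t : ℕ}
    (hι : Fintype.card ι = 2 * t + 1) :
    (Finset.univ.filter fun T : Finset ι => t + 1 ≤ T.card).card = 4 ^ t := by
  have hcard_compl (T : Finset ι) : Tᶜ.card + T.card = 2 * t + 1 := by
    rw [Finset.card_compl, hι, Nat.sub_add_cancel (hι ▸ Finset.card_le_univ T)]
  have hsymm : (Finset.univ.filter fun T : Finset ι => t + 1 ≤ T.card).card =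
      (Finset.univ.filter fun T : Finset ι => ¬ t + 1 ≤ T.card).card := by
    refine Finset.card_bij' (fun T _ => Tᶜ) (fun T _ => Tᶜ) ?_ ?_ (by simp) (by simp) <;>
    · intro T hT
      have := hcard_compl T
      simp only [Finset.mem_filter, Finset.mem_univ, true_and] at hT ⊢
      omega
  have htotal := Finset.card_filter_add_card_filter_not (s := Finset.univ)
    (p := fun T : Finset ι => t + 1 ≤ T.card)
  rw [Finset.card_univ, Fintype.card_finset, hι, pow_succ, pow_mul,
    show (2 : ℕ) ^ 2 = 4 by norm_num] at htotal
  omega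

lemma pow_mul_pow_le_pow_mul_pow_of_add_eq {R : Type*} [CommSemiring R] [PartialOrder R]
    [IsOrderedRing R] {q r : R} (hq : 0 ≤ q) (hqr : q ≤ r) {a b c d : ℕ} (hab : a ≤ b)
    (h : a + d = b + c) : q ^ b * r ^ c ≤ q ^ a * r ^ d := by
  obtain ⟨e, rfl⟩ := Nat.exists_eq_add_of_le hab
  obtain rfl : d = e + c := by omega
  have hr : 0 ≤ r := hq.trans hqr
  calc q ^ (a + e) * r ^ c = q ^ a * (q ^ e * r ^ c) := by rw [pow_add, mul_assoc]
    _ ≤ q ^ a * (r ^ e * r ^ c) := by gcongr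
    _ = q ^ a * r ^ (e + c) := by rw [pow_add]

lemma four_pow_mul_pow_succ_mul_one_sub_pow_le {p δ : ℝ} (hp : 0 ≤ p) (hpδ : p ≤ δ)
    (hδ : δ ≤ 1 / 2) (t : ℕ) :
    4 ^ t * (p ^ (t + 1) * (1 - p) ^ t) ≤
      1 / 2 * (4 * δ * (1 - δ)) ^ (((2 * t + 1 : ℕ) : ℝ) / 2) := by
  have hδδ : 0 ≤ δ * (1 - δ) := by nlinarith
  set s := √(δ * (1 - δ))
  have hsq : s ^ 2 = δ * (1 - δ) := Real.sq_sqrt hδδ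
  have hps : p ≤ s := Real.le_sqrt_of_sq_le (by nlinarith)
  have hrpow : (4 * δ * (1 - δ)) ^ (((2 * t + 1 : ℕ) : ℝ) / 2) = (2 * s) ^ (2 * t + 1) := by
    rw [show 4 * δ * (1 - δ) = (2 * s) ^ 2 by rw [mul_pow, hsq]; ring,
      ← Real.rpow_natCast_mul (by positivity), ← Real.rpow_natCast]
    congr 1
    push_cast
    ring
  calc 4 ^ t * (p ^ (t + 1) * (1 - p) ^ t) = (4 * (p * (1 - p))) ^ t * p := by
        rw [mul_pow, mul_pow]; ring
    _ ≤ (4 * (δ * (1 - δ))) ^ t * s := by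
        have : 0 ≤ p * (1 - p) := mul_nonneg hp (by linarith)
        gcongr (4 * ?_) ^ _ * ?_
        nlinarith
    _ = 1 / 2 * (2 * s) ^ (2 * t + 1) := by rw [pow_succ, pow_mul, mul_pow 2 s 2, hsq]; ring
    _ = _ := by rw [hrpow]

theorem median_trick_general
    {Ω : Type*} [MeasurableSpace Ω] (μ : Measure Ω) [IsProbabilityMeasure μ]
    (l : ℕ) (hl : Odd l)
    (est : Fin l → Ω → ℝ)
    (hindep : iIndepFun est μ)
    (hident : ∀ i j, IdentDistrib (est i) (est j) μ μ)
    (θ ε δ : ℝ) (hδ0 : 0 < δ) (hδ : δ < 1 / 2)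
    (hdev : ∀ j, μ {ω | ε ≤ |est j ω - θ|} ≤ ENNReal.ofReal δ) :
    μ {ω | ε ≤ |sampleMedian (fun j => est j ω) - θ|} ≤
      ENNReal.ofReal ((1 / 2) * (4 * δ * (1 - δ)) ^ ((l : ℝ) / 2)) := by
  obtain ⟨t, rfl⟩ := hl
  set D : Set ℝ := {x | ε ≤ |x - θ|}
  have hD : MeasurableSet D := measurableSet_le measurable_const (by fun_prop)
  set p := μ.real (est 0 ⁻¹' D)
  have hp (j) : μ.real (est j ⁻¹' D) = p := by
    rw [measureReal_def, (hident j 0).measure_mem_eq hD, ← measureReal_def]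
  have hpδ : p ≤ δ := ENNReal.toReal_le_of_le_ofReal hδ0.le (hdev 0)
  have hhalf : (2 * t + 1 + 1) / 2 = t + 1 := by omega
  rw [← ofReal_measureReal]
  refine ENNReal.ofReal_le_ofReal ?_
  calc μ.real {ω | ε ≤ |sampleMedian (fun j => est j ω) - θ|}
      ≤ μ.real {ω | t + 1 ≤ (Finset.univ.filter fun j => est j ω ∈ D).card} :=
        measureReal_mono fun ω hω =>
          hhalf ▸ le_card_filter_of_le_abs_sampleMedian_sub _ (by omega) hω
    _ ≤ ∑ T ∈ Finset.univ.filter (fun T : Finset (Fin (2 * t + 1)) => t + 1 ≤ T.card),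
          p ^ T.card * (1 - p) ^ Tᶜ.card :=
        measureReal_le_card_filter_mem_le_sum (fun j => (hident j j).aemeasurable_fst)
          hindep hD hp _
    _ ≤ ∑ T ∈ Finset.univ.filter (fun T : Finset (Fin (2 * t + 1)) => t + 1 ≤ T.card),
          p ^ (t + 1) * (1 - p) ^ t := Finset.sum_le_sum fun T hT =>
        pow_mul_pow_le_pow_mul_pow_of_add_eq measureReal_nonneg (by linarith)
          (Finset.mem_filter.1 hT).2 (by rw [Finset.card_add_card_compl, Fintype.card_fin]; ring)
    _ = 4 ^ t * (p ^ (t + 1) * (1 - p) ^ t) := by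
        rw [Finset.sum_const, card_filter_succ_le_card_eq_four_pow (Fintype.card_fin _),
          nsmul_eq_mul]
        push_cast
        ring
    _ ≤ _ := four_pow_mul_pow_succ_mul_one_sub_pow_le measureReal_nonneg hpδ hδ.le t

/-- **The median trick (inequality (4.3))**: if `θ̂⁽¹⁾, …, θ̂⁽ˡ⁾` are i.i.d. real random
variables, `l` odd, and `P(|θ̂⁽ʲ⁾ − θ| ≥ ε) ≤ δ` for each `j` with `δ ∈ (0, 1/2)`, then the
median `θ̂ = med(θ̂⁽¹⁾, …, θ̂⁽ˡ⁾)` satisfies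
`P(|θ̂ − θ| ≥ ε) ≤ (1/2)·[4δ(1 − δ)]^{l/2}`. -/
theorem median_trick
    {Ω : Type*} [MeasurableSpace Ω] (μ : Measure Ω) [IsProbabilityMeasure μ]
    (l : ℕ) (hl : Odd l)
    (est : Fin l → Ω → ℝ) (hmeas : ∀ j, Measurable (est j))
    (hindep : iIndepFun est μ)
    (hident : ∀ i j, IdentDistrib (est i) (est j) μ μ)
    (θ ε δ : ℝ) (hε : 0 < ε) (hδ0 : 0 < δ) (hδ : δ < 1 / 2)
    (hdev : ∀ j, μ {ω | ε ≤ |est j ω - θ|} ≤ ENNReal.ofReal δ) :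
    μ {ω | ε ≤ |sampleMedian (fun j => est j ω) - θ|} ≤
      ENNReal.ofReal ((1 / 2) * (4 * δ * (1 - δ)) ^ ((l : ℝ) / 2)) :=
  median_trick_general μ l hl est hindep hident θ ε δ hδ0 hδ hdev
end

section
/- Let t ≥ 4 be an integer and let a > √(t/(t−3)). Define λ² := (1/(t−2))·((2t−3)/(1+a²) + 1) and K² := 2 + (a²+2)/(t−2), and define φ(μ) := (t + μ²)/(t−2) + 1 for μ ∈ ℝ (this equals the one-step expectation PV²(μ) = E(μ_i² + 1 | μ_{i−1} = μ) of the two-step Gibbs sampler for the normal model, with V²(μ) := μ² + 1). Then λ² < 1, φ(μ) ≤ λ²·(μ² + 1) whenever |μ| > a, and φ(μ) ≤ K² whenever |μ| ≤ a. Moreover (2t−3)/(t−3) = t/(t−3) + 1, i.e. π(V²) = (2t−3)/(t−3) when E_π μ² = t/(t−3). -/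
/-- **Proposition 7.1 (drift for the Gibbs sampler of the normal model)**: let `t ≥ 4` be an
integer and `a > √(t/(t−3))`. With
`λ² = (1/(t−2))·((2t−3)/(1+a²) + 1)`, `K² = 2 + (a²+2)/(t−2)` and
`φ(μ) = (t+μ²)/(t−2) + 1` (the one-step expectation `PV²(μ)` of the two-step Gibbs sampler
for the drift function `V²(μ) = μ² + 1` and small set `J = [−a, a]`), one has `λ² < 1`,
`φ(μ) ≤ λ²(μ² + 1)` whenever `|μ| > a`, and `φ(μ) ≤ K²` whenever `|μ| ≤ a`; moreover
`(2t−3)/(t−3) = t/(t−3) + 1`, i.e. `π(V²) = (2t−3)/(t−3)` since `E_π μ² = t/(t−3)`. -/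
theorem gibbs_sampler_drift_verification
    (t : ℕ) (ht : 4 ≤ t) (a : ℝ) (ha : Real.sqrt ((t : ℝ) / ((t : ℝ) - 3)) < a) :
    (1 / ((t : ℝ) - 2)) * ((2 * (t : ℝ) - 3) / (1 + a ^ 2) + 1) < 1 ∧
    (∀ μ : ℝ, a < |μ| →
      ((t : ℝ) + μ ^ 2) / ((t : ℝ) - 2) + 1 ≤
        ((1 / ((t : ℝ) - 2)) * ((2 * (t : ℝ) - 3) / (1 + a ^ 2) + 1)) * (μ ^ 2 + 1)) ∧
    (∀ μ : ℝ, |μ| ≤ a →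
      ((t : ℝ) + μ ^ 2) / ((t : ℝ) - 2) + 1 ≤ 2 + (a ^ 2 + 2) / ((t : ℝ) - 2)) ∧
    (2 * (t : ℝ) - 3) / ((t : ℝ) - 3) = (t : ℝ) / ((t : ℝ) - 3) + 1 := by
  have hT : (4:ℝ) ≤ (t:ℝ) := by exact_mod_cast ht
  have hT2 : (0:ℝ) < (t:ℝ) - 2 := by linarith
  have hT3 : (0:ℝ) < (t:ℝ) - 3 := by linarith
  have hdiv : (0:ℝ) ≤ (t:ℝ) / ((t:ℝ) - 3) := div_nonneg (by linarith) hT3.le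
  have ha0 : 0 < a := lt_of_le_of_lt (Real.sqrt_nonneg _) ha
  have ha2 : (t:ℝ) / ((t:ℝ) - 3) < a ^ 2 := by
    have := Real.sq_sqrt hdiv
    nlinarith [pow_lt_pow_left₀ ha (Real.sqrt_nonneg _) two_ne_zero]
  have hkey : (t:ℝ) < ((t:ℝ) - 3) * a ^ 2 := by nlinarith [(div_lt_iff₀ hT3).mp ha2]
  have h1a : (0:ℝ) < 1 + a ^ 2 := by positivity
  refine ⟨?_, ?_, ?_, ?_⟩
  · rw [one_div, inv_mul_eq_div, div_add' _ _ _ h1a.ne', div_div,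
      div_lt_one (by positivity)]
    nlinarith
  · intro μ hμ
    have hμ2 : a ^ 2 < μ ^ 2 := by
      have := pow_lt_pow_left₀ hμ ha0.le two_ne_zero
      rwa [sq_abs] at this
    rw [div_add' _ _ _ h1a.ne', div_add' _ _ _ hT2.ne', one_div, inv_mul_eq_div,
      div_div, div_mul_eq_mul_div, div_le_div_iff₀ hT2 (by positivity)]
    nlinarith [mul_nonneg (by linarith : (0:ℝ) ≤ 2*(t:ℝ)-3) (by linarith : (0:ℝ) ≤ μ^2 - a^2)]
  · intro μ hμ
    have hμ2 : μ ^ 2 ≤ a ^ 2 := by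
      have := pow_le_pow_left₀ (abs_nonneg μ) hμ 2
      rwa [sq_abs] at this
    have h : 2 + (a ^ 2 + 2) / ((t:ℝ) - 2) = (2*((t:ℝ)-2) + (a^2+2)) / ((t:ℝ)-2) := by
      field_simp
    rw [div_add' _ _ _ hT2.ne', h, div_le_div_iff₀ hT2 hT2]
    nlinarith
  · field_simp
    ring
end
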